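/- arXiv:2212.12847 — 4 statements merged into one kernel-verified Lean document; each statement's English description precedes it below -/
import Mathlib

section
/- For all positive integers n and k with 1 ≤ k ≤ n, the count s_{k,n} satisfies the recurrence s_{k,n} = Σ_{i=1}^{⌊n/k⌋} (n! / (k^i · i! · (n−ki)!)) · Σ_{j=k+1}^{n−ki} s_{j,n−ki} + [k | n] · n! / ((n/k)! · k^{n/k}), where [k | n] equals 1 if k divides n and 0 otherwise. -/
set_option linter.unusedSectionVars false
set_option linter.unusedVariables false
set_option linter.unusedTactic false
set_option maxHeartbeats 1000000

open Equiv Function Finset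
open Fin.NatCast

/-- `smallestComponent k n` is the number of permutations of an `n`-element set whose
smallest cycle has length exactly `k`. -/
noncomputable def smallestComponent (k n : ℕ) : ℕ :=
  Nat.card {σ : Equiv.Perm (Fin n) //
    sInf (Set.range fun x => Function.minimalPeriod (⇑σ) x) = k}

noncomputable def allK (k m : ℕ) : ℕ :=
  Nat.card {π : Equiv.Perm (Fin m) // ∀ a, Function.minimalPeriod ⇑π a = k}

noncomputable def gtK (k m : ℕ) : ℕ :=
  Nat.card {τ : Equiv.Perm (Fin m) // ∀ a, k < Function.minimalPeriod ⇑τ a}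



section basic
variable {α β : Type*}

lemma perm_isPeriodicPt [Finite α] (σ : Equiv.Perm α) (x : α) :
    IsPeriodicPt ⇑σ (orderOf σ) x := by
  show (⇑σ)^[orderOf σ] x = x
  rw [Equiv.Perm.iterate_eq_pow, pow_orderOf_eq_one]; rfl

lemma perm_mp_pos [Finite α] (σ : Equiv.Perm α) (x : α) :
    0 < Function.minimalPeriod ⇑σ x :=
  (perm_isPeriodicPt σ x).minimalPeriod_pos (orderOf_pos σ)

lemma perm_mp_le [Fintype α] (σ : Equiv.Perm α) (x : α) :
    Function.minimalPeriod ⇑σ x ≤ Fintype.card α := by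
  classical
  have h := Function.iterate_injOn_Iio_minimalPeriod (f := ⇑σ) (x := x)
  have := Finset.card_le_card_of_injOn (f := fun i => (⇑σ)^[i] x)
    (s := Finset.range (Function.minimalPeriod ⇑σ x)) (t := Finset.univ)
    (fun a _ => Finset.mem_univ _)
    (fun a ha b hb hab => h (by simpa using ha) (by simpa using hb) hab)
  simpa using this

/-- minimal period is invariant under conjugation by an equiv -/
lemma perm_mp_permCongr (e : α ≃ β) (σ : Equiv.Perm α) (x : α) :
    Function.minimalPeriod ⇑(e.permCongr σ) (e x) = Function.minimalPeriod ⇑σ x := by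
  rw [Function.minimalPeriod_eq_minimalPeriod_iff]
  intro n
  have hit : ∀ m : ℕ, (⇑(e.permCongr σ))^[m] (e x) = e ((⇑σ)^[m] x) := by
    intro m
    induction m with
    | zero => rfl
    | succ m ih => rw [Function.iterate_succ_apply', ih, Function.iterate_succ_apply',
        Equiv.permCongr_apply, Equiv.symm_apply_apply]
  unfold IsPeriodicPt IsFixedPt
  rw [hit n]
  exact ⟨fun h => e.injective h, fun h => by rw [h]⟩

lemma card_perm_pred (Pr : ℕ → Prop) (e : α ≃ β) :
    Nat.card {π : Equiv.Perm α // ∀ a, Pr (Function.minimalPeriod ⇑π a)} =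
    Nat.card {π : Equiv.Perm β // ∀ a, Pr (Function.minimalPeriod ⇑π a)} := by
  apply Nat.card_congr
  refine (e.permCongr).subtypeEquiv (fun σ => ⟨fun h b => ?_, fun h a => ?_⟩)
  · have := perm_mp_permCongr e σ (e.symm b)
    rw [Equiv.apply_symm_apply] at this
    rw [this]; exact h _
  · have := perm_mp_permCongr e σ a
    rw [← this]; exact h _

end basic



variable {α : Type*}

lemma subtypePerm_iterate (σ : Equiv.Perm α) {p : α → Prop} (h : ∀ x, p (σ x) ↔ p x)
    (m : ℕ) (a : {x // p x}) : ((⇑(σ.subtypePerm h))^[m] a : α) = (⇑σ)^[m] (a : α) := by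
  induction m with
  | zero => rfl
  | succ m ih => rw [Function.iterate_succ_apply', Function.iterate_succ_apply', ← ih]; rfl

lemma perm_mp_subtypePerm (σ : Equiv.Perm α) {p : α → Prop} (h : ∀ x, p (σ x) ↔ p x)
    (a : {x // p x}) :
    Function.minimalPeriod ⇑(σ.subtypePerm h) a = Function.minimalPeriod ⇑σ (a : α) := by
  rw [Function.minimalPeriod_eq_minimalPeriod_iff]
  intro n
  unfold IsPeriodicPt IsFixedPt
  rw [← Subtype.coe_inj, subtypePerm_iterate]

section congr
variable [DecidableEq α] {p : α → Prop} [DecidablePred p]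

lemma subtypeCongr_iterate_left (π : Equiv.Perm {x // p x}) (τ : Equiv.Perm {x // ¬ p x})
    (m : ℕ) (a : {x // p x}) :
    (⇑(π.subtypeCongr τ))^[m] (a : α) = ((⇑π)^[m] a : α) := by
  induction m with
  | zero => rfl
  | succ m ih =>
      rw [Function.iterate_succ_apply', Function.iterate_succ_apply', ih,
        Equiv.Perm.subtypeCongr.left_apply_subtype]

lemma subtypeCongr_iterate_right (π : Equiv.Perm {x // p x}) (τ : Equiv.Perm {x // ¬ p x})
    (m : ℕ) (a : {x // ¬ p x}) :
    (⇑(π.subtypeCongr τ))^[m] (a : α) = ((⇑τ)^[m] a : α) := by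
  induction m with
  | zero => rfl
  | succ m ih =>
      rw [Function.iterate_succ_apply', Function.iterate_succ_apply', ih,
        Equiv.Perm.subtypeCongr.right_apply_subtype]

lemma perm_mp_subtypeCongr_left (π : Equiv.Perm {x // p x}) (τ : Equiv.Perm {x // ¬ p x})
    (a : {x // p x}) :
    Function.minimalPeriod ⇑(π.subtypeCongr τ) (a : α) = Function.minimalPeriod ⇑π a := by
  rw [Function.minimalPeriod_eq_minimalPeriod_iff]
  intro n
  unfold IsPeriodicPt IsFixedPt
  rw [subtypeCongr_iterate_left, Subtype.coe_inj]

lemma perm_mp_subtypeCongr_right (π : Equiv.Perm {x // p x}) (τ : Equiv.Perm {x // ¬ p x})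
    (a : {x // ¬ p x}) :
    Function.minimalPeriod ⇑(π.subtypeCongr τ) (a : α) = Function.minimalPeriod ⇑τ a := by
  rw [Function.minimalPeriod_eq_minimalPeriod_iff]
  intro n
  unfold IsPeriodicPt IsFixedPt
  rw [subtypeCongr_iterate_right, Subtype.coe_inj]

end congr

lemma finRotate_iterate (K : ℕ) (m : ℕ) (x : Fin (K + 1)) :
    (⇑(finRotate (K + 1)))^[m] x = x + (m : Fin (K + 1)) := by
  induction m with
  | zero => simp
  | succ m ih =>
      rw [Function.iterate_succ_apply', ih, finRotate_succ_apply]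
      push_cast
      open Fin.CommRing in ring

lemma perm_mp_finRotate (K : ℕ) (x : Fin (K + 1)) :
    Function.minimalPeriod ⇑(finRotate (K + 1)) x = K + 1 := by
  have key : ∀ n : ℕ, IsPeriodicPt ⇑(finRotate (K + 1)) n x ↔ (K + 1) ∣ n := by
    intro n
    unfold IsPeriodicPt IsFixedPt
    rw [finRotate_iterate]
    constructor
    · intro h
      have : (n : Fin (K + 1)) = 0 := by
        have := congrArg (· - x) h
        simpa [add_comm, add_sub_cancel_right] using this
      exact (Fin.natCast_eq_zero).mp this
    · intro h
      have : (n : Fin (K + 1)) = 0 := (Fin.natCast_eq_zero).mpr h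
      rw [this, add_zero]
  apply Nat.dvd_antisymm
  · exact Function.IsPeriodicPt.minimalPeriod_dvd ((key (K + 1)).mpr dvd_rfl)
  · by_cases hpos : 0 < Function.minimalPeriod ⇑(finRotate (K + 1)) x
    · exact (key _).mp (Function.isPeriodicPt_minimalPeriod _ _)
    · exact (key _).mp (Function.isPeriodicPt_minimalPeriod _ _)


variable {α : Type*} [Fintype α] [DecidableEq α]

lemma perm_mp_apply {α : Type*} [Finite α] (σ : Equiv.Perm α) (x : α) :
    Function.minimalPeriod ⇑σ (σ x) = Function.minimalPeriod ⇑σ x := by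
  apply Function.minimalPeriod_apply
  rw [← Function.minimalPeriod_pos_iff_mem_periodicPts]
  exact perm_mp_pos σ x

variable (k : ℕ) (s : Finset α)

private lemma pres {σ : Equiv.Perm α}
    (hσ : (∀ x ∈ s, Function.minimalPeriod ⇑σ x = k) ∧
      (∀ x ∉ s, k < Function.minimalPeriod ⇑σ x)) :
    ∀ x, x ∈ s ↔ σ x ∈ s := by
  intro x
  constructor
  · intro hx
    by_contra hns
    have := hσ.2 _ hns
    rw [perm_mp_apply, hσ.1 x hx] at this
    exact lt_irrefl _ this
  · intro hx
    by_contra hns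
    have := hσ.2 _ hns
    rw [← perm_mp_apply σ x, hσ.1 _ hx] at this
    exact lt_irrefl _ this

def decompEquiv :
    {σ : Equiv.Perm α // (∀ x ∈ s, Function.minimalPeriod ⇑σ x = k) ∧
      (∀ x ∉ s, k < Function.minimalPeriod ⇑σ x)} ≃
    {π : Equiv.Perm {x // x ∈ s} // ∀ a, Function.minimalPeriod ⇑π a = k} ×
    {τ : Equiv.Perm {x // ¬ x ∈ s} // ∀ a, k < Function.minimalPeriod ⇑τ a} where
  toFun σ :=
    ⟨⟨σ.1.subtypePerm (fun x => (pres k s σ.2 x).symm), fun a => by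
        rw [perm_mp_subtypePerm]; exact σ.2.1 _ a.2⟩,
     ⟨σ.1.subtypePerm (fun x => not_iff_not.mpr (pres k s σ.2 x).symm), fun a => by
        rw [perm_mp_subtypePerm]; exact σ.2.2 _ a.2⟩⟩
  invFun x :=
    ⟨x.1.1.subtypeCongr x.2.1, by
      constructor
      · intro y hy
        have := perm_mp_subtypeCongr_left (p := (· ∈ s)) x.1.1 x.2.1 ⟨y, hy⟩
        rw [this]; exact x.1.2 _
      · intro y hy
        have := perm_mp_subtypeCongr_right (p := (· ∈ s)) x.1.1 x.2.1 ⟨y, hy⟩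
        rw [this]; exact x.2.2 _⟩
  left_inv σ := by
    apply Subtype.ext
    ext x
    by_cases hx : x ∈ s
    · rw [Equiv.Perm.subtypeCongr.left_apply _ _ hx]; rfl
    · rw [Equiv.Perm.subtypeCongr.right_apply _ _ hx]; rfl
  right_inv x := by
    refine Prod.ext (Subtype.ext ?_) (Subtype.ext ?_) <;> ext a
    · show ((x.1.1.subtypeCongr x.2.1) (a : α) : α) = _
      rw [Equiv.Perm.subtypeCongr.left_apply _ _ a.2]
    · show ((x.1.1.subtypeCongr x.2.1) (a : α) : α) = _
      rw [Equiv.Perm.subtypeCongr.right_apply _ _ a.2]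


namespace CycRem

variable {α : Type*} [Fintype α] [DecidableEq α] (K : ℕ) (x0 : α)

def t (g : Fin K ↪ {x : α // x ≠ x0}) : Fin (K + 1) → α :=
  Fin.cases x0 (fun j => (g j : α))

lemma t_zero (g : Fin K ↪ {x : α // x ≠ x0}) : t K x0 g 0 = x0 := rfl

lemma t_succ (g : Fin K ↪ {x : α // x ≠ x0}) (j : Fin K) : t K x0 g j.succ = (g j : α) :=
  by simp [t]

lemma t_inj (g : Fin K ↪ {x : α // x ≠ x0}) : Function.Injective (t K x0 g) := by
  intro a b hab
  induction a using Fin.cases with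
  | zero =>
      induction b using Fin.cases with
      | zero => rfl
      | succ j => rw [t_zero, t_succ] at hab; exact absurd hab.symm (g j).2
  | succ i =>
      induction b using Fin.cases with
      | zero => rw [t_zero, t_succ] at hab; exact absurd hab (g i).2
      | succ j =>
          rw [t_succ, t_succ] at hab
          exact congrArg Fin.succ (g.injective (Subtype.ext hab))

def S (g : Fin K ↪ {x : α // x ≠ x0}) : Finset α := Finset.image (t K x0 g) Finset.univ

lemma mem_S (K : ℕ) (x0 : α) {g : Fin K ↪ {x : α // x ≠ x0}} {x : α} :
    x ∈ S K x0 g ↔ ∃ j, t K x0 g j = x := by simp [S]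

lemma card_S (g : Fin K ↪ {x : α // x ≠ x0}) : (S K x0 g).card = K + 1 := by
  rw [S, Finset.card_image_of_injective _ (t_inj K x0 g)]; simp

noncomputable def eS (g : Fin K ↪ {x : α // x ≠ x0}) : Fin (K + 1) ≃ {x // x ∈ S K x0 g} :=
  Equiv.ofBijective (fun j => ⟨t K x0 g j, (mem_S K x0).mpr ⟨j, rfl⟩⟩)
    ⟨fun a b hab => t_inj K x0 g (congrArg Subtype.val hab),
     fun x => by obtain ⟨j, hj⟩ := (mem_S K x0).mp x.2; exact ⟨j, Subtype.ext hj⟩⟩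

noncomputable def Φperm (g : Fin K ↪ {x : α // x ≠ x0})
    (π' : Equiv.Perm {x // ¬ x ∈ S K x0 g}) : Equiv.Perm α :=
  Equiv.Perm.subtypeCongr ((eS K x0 g).permCongr (finRotate (K + 1))) π'

lemma Φperm_t (g : Fin K ↪ {x : α // x ≠ x0}) (π' : Equiv.Perm {x // ¬ x ∈ S K x0 g})
    (j : Fin (K + 1)) : Φperm K x0 g π' (t K x0 g j) = t K x0 g (j + 1) := by
  have hmem : t K x0 g j ∈ S K x0 g := (mem_S K x0).mpr ⟨j, rfl⟩
  rw [Φperm, Equiv.Perm.subtypeCongr.left_apply _ _ hmem]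
  have h1 : (⟨t K x0 g j, hmem⟩ : {x // x ∈ S K x0 g}) = eS K x0 g j := rfl
  rw [h1, Equiv.permCongr_apply, Equiv.symm_apply_apply, finRotate_succ_apply]
  rfl

lemma Φperm_iterate (g : Fin K ↪ {x : α // x ≠ x0}) (π' : Equiv.Perm {x // ¬ x ∈ S K x0 g})
    (m : ℕ) : (⇑(Φperm K x0 g π'))^[m] x0 = t K x0 g (m : Fin (K + 1)) := by
  induction m with
  | zero => simp [t_zero]
  | succ m ih =>
      rw [Function.iterate_succ_apply', ih, Φperm_t]
      congr 1
      push_cast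
      ring

lemma Φperm_mp (g : Fin K ↪ {x : α // x ≠ x0}) (π' : Equiv.Perm {x // ¬ x ∈ S K x0 g})
    (hπ' : ∀ a, Function.minimalPeriod ⇑π' a = K + 1) (a : α) :
    Function.minimalPeriod ⇑(Φperm K x0 g π') a = K + 1 := by
  by_cases ha : a ∈ S K x0 g
  · have h1 : a = ((⟨a, ha⟩ : {x // x ∈ S K x0 g}) : α) := rfl
    rw [h1, Φperm, perm_mp_subtypeCongr_left]
    have h2 : (⟨a, ha⟩ : {x // x ∈ S K x0 g}) =
        (eS K x0 g) ((eS K x0 g).symm ⟨a, ha⟩) := by rw [Equiv.apply_symm_apply]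
    rw [h2, perm_mp_permCongr, perm_mp_finRotate]
  · have h1 : a = ((⟨a, ha⟩ : {x // ¬ x ∈ S K x0 g}) : α) := rfl
    rw [h1, Φperm, perm_mp_subtypeCongr_right, hπ']

end CycRem

namespace CycRem
variable {α : Type*} [Fintype α] [DecidableEq α] (K : ℕ) (x0 : α)

lemma t_eq_iterate (g : Fin K ↪ {x : α // x ≠ x0}) (π' : Equiv.Perm {x // ¬ x ∈ S K x0 g})
    (j : Fin (K + 1)) : t K x0 g j = (⇑(Φperm K x0 g π'))^[j.val] x0 := by
  rw [Φperm_iterate, Fin.cast_val_eq_self]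

lemma Φ_inj (g₁ g₂ : Fin K ↪ {x : α // x ≠ x0})
    (π₁ : Equiv.Perm {x // ¬ x ∈ S K x0 g₁}) (π₂ : Equiv.Perm {x // ¬ x ∈ S K x0 g₂})
    (h : Φperm K x0 g₁ π₁ = Φperm K x0 g₂ π₂) :
    (⟨g₁, π₁⟩ : Σ g : Fin K ↪ {x : α // x ≠ x0}, Equiv.Perm {x // ¬ x ∈ S K x0 g}) =
      ⟨g₂, π₂⟩ := by
  have ht : ∀ j : Fin (K + 1), t K x0 g₁ j = t K x0 g₂ j := by
    intro j
    rw [t_eq_iterate K x0 g₁ π₁, t_eq_iterate K x0 g₂ π₂, h]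
  have hg : g₁ = g₂ := by
    ext j
    have := ht j.succ
    rwa [t_succ, t_succ] at this
  subst hg
  have hπ : π₁ = π₂ := by
    ext a
    have h1 := congrArg (fun σ => σ (a : α)) h
    simp only [Φperm] at h1
    rw [Equiv.Perm.subtypeCongr.right_apply _ _ a.2,
      Equiv.Perm.subtypeCongr.right_apply _ _ a.2] at h1
    exact h1
  rw [hπ]

section surj
variable (π : Equiv.Perm α) (hπ : ∀ a, Function.minimalPeriod ⇑π a = K + 1)

lemma iter_ne (hπ : ∀ a, Function.minimalPeriod ⇑π a = K + 1) (j : ℕ) (hj : 0 < j) (hjK : j < K + 1) : (⇑π)^[j] x0 ≠ x0 := by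
  intro hc
  have h0 : (⇑π)^[0] x0 = x0 := rfl
  have := Function.iterate_injOn_Iio_minimalPeriod (f := ⇑π) (x := x0)
    (by rw [hπ]; exact Set.mem_Iio.mpr hjK) (by rw [hπ]; exact Set.mem_Iio.mpr (Nat.succ_pos K))
    (hc.trans h0.symm)
  omega

noncomputable def gOf : Fin K ↪ {x : α // x ≠ x0} where
  toFun j := ⟨(⇑π)^[j.val + 1] x0, iter_ne K x0 π hπ _ (Nat.succ_pos _) (by have := j.isLt; omega)⟩
  inj' := by
    intro a b hab
    simp only [Subtype.mk.injEq] at hab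
    have := Function.iterate_injOn_Iio_minimalPeriod (f := ⇑π) (x := x0)
      (by rw [hπ]; exact Set.mem_Iio.mpr (by omega)) (by rw [hπ]; exact Set.mem_Iio.mpr (by omega))
      hab
    ext; omega

lemma t_gOf (j : Fin (K + 1)) : t K x0 (gOf K x0 π hπ) j = (⇑π)^[j.val] x0 := by
  induction j using Fin.cases with
  | zero => rfl
  | succ i => rw [t_succ]; rfl

lemma mem_S_gOf (x : α) : x ∈ S K x0 (gOf K x0 π hπ) ↔ ∃ j < K + 1, (⇑π)^[j] x0 = x := by
  rw [mem_S]
  constructor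
  · rintro ⟨j, hj⟩
    exact ⟨j.val, j.isLt, by rwa [t_gOf] at hj⟩
  · rintro ⟨j, hj, hjx⟩
    exact ⟨⟨j, hj⟩, by rwa [t_gOf]⟩

lemma S_pres : ∀ x, x ∈ S K x0 (gOf K x0 π hπ) ↔ π x ∈ S K x0 (gOf K x0 π hπ) := by
  intro x
  rw [mem_S_gOf, mem_S_gOf]
  constructor
  · rintro ⟨j, hj, hjx⟩
    by_cases hjK : j + 1 < K + 1
    · exact ⟨j + 1, hjK, by rw [Function.iterate_succ_apply', hjx]⟩
    · have hj' : j = K := by omega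
      have hjx' : (⇑π)^[K] x0 = x := by rw [← hj']; exact hjx
      refine ⟨0, Nat.succ_pos K, ?_⟩
      have hcyc : (⇑π)^[K + 1] x0 = x0 := by
        have := Function.iterate_minimalPeriod (f := ⇑π) (x := x0)
        rwa [hπ] at this
      have hx : π x = x0 := by
        rw [← hjx', ← Function.iterate_succ_apply' (⇑π) K x0]
        exact hcyc
      exact hx.symm
  · rintro ⟨j, hj, hjx⟩
    by_cases hj0 : 0 < j
    · refine ⟨j - 1, by omega, ?_⟩
      apply π.injective
      rw [← Function.iterate_succ_apply' π (j-1) x0]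
      have h2 : (j - 1).succ = j := by omega
      rw [h2, hjx]
    · have hj' : j = 0 := by omega
      subst hj'
      refine ⟨K, by omega, ?_⟩
      apply π.injective
      rw [← Function.iterate_succ_apply' π K x0]
      have hcyc : (⇑π)^[K + 1] x0 = x0 := by
        have := Function.iterate_minimalPeriod (f := ⇑π) (x := x0)
        rwa [hπ] at this
      rw [hcyc]
      exact hjx
end surj

end CycRem

namespace CycRem
variable {α : Type*} [Fintype α] [DecidableEq α] (K : ℕ) (x0 : α)
variable (π : Equiv.Perm α) (hπ : ∀ a, Function.minimalPeriod ⇑π a = K + 1)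

noncomputable def πOf : Equiv.Perm {x // ¬ x ∈ S K x0 (gOf K x0 π hπ)} :=
  π.subtypePerm (fun x => not_iff_not.mpr (S_pres K x0 π hπ x).symm)

lemma πOf_mp (a : {x // ¬ x ∈ S K x0 (gOf K x0 π hπ)}) :
    Function.minimalPeriod ⇑(πOf K x0 π hπ) a = K + 1 := by
  rw [πOf, perm_mp_subtypePerm]; exact hπ _

lemma Φ_surj : Φperm K x0 (gOf K x0 π hπ) (πOf K x0 π hπ) = π := by
  ext x
  by_cases hx : x ∈ S K x0 (gOf K x0 π hπ)
  · obtain ⟨j, hj⟩ := (mem_S K x0).mp hx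
    rw [← hj, Φperm_t, t_gOf, t_gOf]
    have hval : ((j + 1 : Fin (K + 1))).val = (j.val + 1) % (K + 1) := by
      rw [Fin.add_def]
      congr 1
      simp [Nat.mod_mod_of_dvd]
    rw [hval]
    have hmod : (⇑π)^[(j.val + 1) % (K + 1)] x0 = (⇑π)^[j.val + 1] x0 := by
      have := Function.iterate_mod_minimalPeriod_eq (f := ⇑π) (x := x0) (n := j.val + 1)
      rwa [hπ] at this
    rw [hmod, Function.iterate_succ_apply']
  · rw [Φperm, Equiv.Perm.subtypeCongr.right_apply _ _ hx]
    rfl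

end CycRem

open CycRem in
lemma allK_rec (K m : ℕ) (hm : 1 ≤ m) :
    allK (K + 1) m = (m - 1).descFactorial K * allK (K + 1) (m - (K + 1)) := by
  classical
  set x0 : Fin m := ⟨0, hm⟩
  set F : (Σ g : (Fin K ↪ {x : Fin m // x ≠ x0}),
      {π' : Equiv.Perm {x // ¬ x ∈ S K x0 g} // ∀ a, Function.minimalPeriod ⇑π' a = K + 1}) →
      {π : Equiv.Perm (Fin m) // ∀ a, Function.minimalPeriod ⇑π a = K + 1} :=
    fun p => ⟨Φperm K x0 p.1 p.2.1, Φperm_mp K x0 p.1 p.2.1 p.2.2⟩ with hF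
  have hbij : Function.Bijective F := by
    constructor
    · rintro ⟨g₁, π₁, h₁⟩ ⟨g₂, π₂, h₂⟩ h
      have h' : Φperm K x0 g₁ π₁ = Φperm K x0 g₂ π₂ := congrArg Subtype.val h
      have := Φ_inj K x0 g₁ g₂ π₁ π₂ h'
      obtain ⟨hg, hπ⟩ := Sigma.mk.inj_iff.mp this
      subst hg
      have : π₁ = π₂ := eq_of_heq hπ
      subst this
      rfl
    · rintro ⟨π, hπ⟩
      exact ⟨⟨gOf K x0 π hπ, πOf K x0 π hπ, πOf_mp K x0 π hπ⟩,
        Subtype.ext (Φ_surj K x0 π hπ)⟩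
  have hcard := Nat.card_eq_of_bijective F hbij
  rw [allK, ← hcard, Nat.card_eq_fintype_card, Fintype.card_sigma]
  have hfib : ∀ g : Fin K ↪ {x : Fin m // x ≠ x0},
      Nat.card {π' : Equiv.Perm {x // ¬ x ∈ S K x0 g} //
        ∀ a, Function.minimalPeriod ⇑π' a = K + 1} = allK (K + 1) (m - (K + 1)) := by
    intro g
    have hc : Fintype.card {x // ¬ x ∈ S K x0 g} = m - (K + 1) := by
      rw [Fintype.card_subtype_compl]
      simp [card_S]
    exact card_perm_pred (fun d => d = K + 1) (Fintype.equivFinOfCardEq hc)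
  have hfib' : ∀ g : Fin K ↪ {x : Fin m // x ≠ x0},
      Fintype.card {π' : Equiv.Perm {x // ¬ x ∈ S K x0 g} //
        ∀ a, Function.minimalPeriod ⇑π' a = K + 1} = allK (K + 1) (m - (K + 1)) := by
    intro g; rw [← Nat.card_eq_fintype_card]; exact hfib g
  rw [Finset.sum_congr rfl (fun g _ => hfib' g), Finset.sum_const, smul_eq_mul]
  congr 1
  rw [Finset.card_univ, Fintype.card_embedding_eq, Fintype.card_fin]
  congr 1
  rw [Fintype.card_subtype_compl]
  simp




lemma allK_zero (k : ℕ) : allK k 0 = 1 := by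
  rw [allK, Nat.card_eq_one_iff_unique]
  constructor
  · constructor
    rintro ⟨π₁, h₁⟩ ⟨π₂, h₂⟩
    have : π₁ = π₂ := Subsingleton.elim _ _
    simp [this]
  · exact ⟨1, fun a => absurd a.2 (by omega)⟩

lemma allK_eq_zero_of_lt (k m : ℕ) (hm : 1 ≤ m) (hmk : m < k) : allK k m = 0 := by
  rw [allK, Nat.card_eq_zero]
  left
  exact ⟨fun x => by
    have h1 := perm_mp_le x.1 ⟨0, hm⟩
    rw [x.2, Fintype.card_fin] at h1
    omega⟩

lemma allK_mul_eq (k : ℕ) (hk : 1 ≤ k) (i : ℕ) :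
    allK k (k * i) * (k ^ i * i.factorial) = (k * i).factorial := by
  obtain ⟨K, rfl⟩ : ∃ K, k = K + 1 := ⟨k - 1, by omega⟩
  induction i with
  | zero => simp [allK_zero]
  | succ i ih =>
      have hm : 1 ≤ (K + 1) * (i + 1) := Nat.one_le_iff_ne_zero.mpr (by positivity)
      rw [allK_rec K _ hm]
      have hsub : (K + 1) * (i + 1) - (K + 1) = (K + 1) * i := by ring_nf; omega
      rw [hsub]
      have hdesc : ((K + 1) * (i + 1) - 1).descFactorial K * ((K + 1) * i).factorial
          = ((K + 1) * (i + 1) - 1).factorial := by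
        have := Nat.factorial_mul_descFactorial
          (n := (K + 1) * (i + 1) - 1) (k := K) (by
            have : K + 1 ≤ (K + 1) * (i + 1) := Nat.le_mul_of_pos_right _ (by omega)
            omega)
        have hsub2 : (K + 1) * (i + 1) - 1 - K = (K + 1) * i := by ring_nf; omega
        rw [hsub2] at this
        exact (Nat.mul_comm _ _).trans this
      calc ((K+1)*(i+1) - 1).descFactorial K * allK (K+1) ((K+1)*i) * ((K+1)^(i+1) * (i+1).factorial)
          = (((K+1)*(i+1) - 1).descFactorial K * ((K+1)*(i+1))) *
            (allK (K+1) ((K+1)*i) * ((K+1)^i * i.factorial)) := by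
            rw [pow_succ, Nat.factorial_succ]; ring
        _ = (((K+1)*(i+1) - 1).descFactorial K * ((K+1)*(i+1))) * ((K+1)*i).factorial := by rw [ih]
        _ = ((K+1)*(i+1) - 1).factorial * ((K+1)*(i+1)) := by rw [← hdesc]; ring
        _ = ((K+1)*(i+1)).factorial := by
            have h2 : (K+1)*(i+1) = ((K+1)*(i+1) - 1) + 1 := by omega
            rw [mul_comm ((K+1)*(i+1) - 1).factorial, h2, Nat.factorial_succ,
              Nat.add_sub_cancel]

lemma allK_not_dvd (k c : ℕ) (hk : 1 ≤ k) (h : ¬ k ∣ c) : allK k c = 0 := by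
  obtain ⟨K, rfl⟩ : ∃ K, k = K + 1 := ⟨k - 1, by omega⟩
  induction c using Nat.strong_induction_on with
  | _ c ih =>
    have hc : 1 ≤ c := by
      rcases Nat.eq_zero_or_pos c with h0 | h1
      · exact absurd (h0 ▸ dvd_zero _) h
      · exact h1
    by_cases hck : c < K + 1
    · exact allK_eq_zero_of_lt _ _ hc hck
    · rw [allK_rec K c hc]
      have : allK (K + 1) (c - (K + 1)) = 0 := by
        apply ih
        · omega
        · intro hdvd
          obtain ⟨d, hd⟩ := hdvd
          exact h ⟨d + 1, by rw [Nat.mul_succ, ← hd]; omega⟩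
      rw [this, mul_zero]








section
variable {m : ℕ} (hm : 1 ≤ m)
include hm

noncomputable def mpf (σ : Equiv.Perm (Fin m)) : ℕ :=
  sInf (Set.range fun x => Function.minimalPeriod (⇑σ) x)

lemma mpf_exists (σ : Equiv.Perm (Fin m)) :
    ∃ x : Fin m, Function.minimalPeriod ⇑σ x = mpf σ := by
  have hne : (Set.range fun x => Function.minimalPeriod (⇑σ) x).Nonempty :=
    ⟨_, ⟨⟨0, hm⟩, rfl⟩⟩
  obtain ⟨x, hx⟩ := Nat.sInf_mem hne
  exact ⟨x, hx⟩

lemma mpf_le (σ : Equiv.Perm (Fin m)) (x : Fin m) :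
    mpf σ ≤ Function.minimalPeriod ⇑σ x :=
  Nat.sInf_le ⟨x, rfl⟩

lemma mpf_le_card (σ : Equiv.Perm (Fin m)) : mpf σ ≤ m := by
  obtain ⟨x, hx⟩ := mpf_exists hm σ
  rw [← hx]
  simpa using perm_mp_le σ x

lemma mpf_pos (σ : Equiv.Perm (Fin m)) : 0 < mpf σ := by
  obtain ⟨x, hx⟩ := mpf_exists hm σ
  rw [← hx]
  exact perm_mp_pos σ x

lemma smallestComponent_eq_card (k : ℕ) [DecidablePred fun σ : Equiv.Perm (Fin m) => mpf σ = k] :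
    smallestComponent k m = (Finset.univ.filter fun σ : Equiv.Perm (Fin m) => mpf σ = k).card := by
  rw [smallestComponent, Nat.card_eq_fintype_card]
  convert Fintype.card_subtype _
  · rfl
  · exact Classical.decPred _

lemma gtK_eq_sum (k : ℕ) : gtK k m = ∑ j ∈ Finset.Icc (k + 1) m, smallestComponent j m := by
  classical
  have h1 : gtK k m =
      (Finset.univ.filter fun τ : Equiv.Perm (Fin m) => ∀ x, k < Function.minimalPeriod ⇑τ x).card := by
    rw [gtK, Nat.card_eq_fintype_card]
    convert Fintype.card_subtype _
  rw [h1]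
  have hmap : ∀ τ ∈ (Finset.univ.filter fun τ : Equiv.Perm (Fin m) =>
      ∀ x, k < Function.minimalPeriod ⇑τ x), mpf τ ∈ Finset.Icc (k + 1) m := by
    intro τ hτ
    rw [Finset.mem_filter] at hτ
    rw [Finset.mem_Icc]
    obtain ⟨x, hx⟩ := mpf_exists hm τ
    constructor
    · rw [← hx]; exact hτ.2 x
    · exact mpf_le_card hm τ
  rw [Finset.card_eq_sum_card_fiberwise hmap]
  apply Finset.sum_congr rfl
  intro j hj
  rw [Finset.mem_Icc] at hj
  rw [smallestComponent_eq_card hm]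
  congr 1
  rw [Finset.filter_filter]
  apply Finset.filter_congr
  intro τ _
  constructor
  · rintro ⟨_, h2⟩; exact h2
  · intro h2
    refine ⟨fun x => ?_, h2⟩
    calc k < j := hj.1
      _ = mpf τ := h2.symm
      _ ≤ _ := mpf_le hm τ x

end

lemma gtK_zero (k : ℕ) : gtK k 0 = 1 := by
  rw [gtK, Nat.card_eq_one_iff_unique]
  constructor
  · constructor
    rintro ⟨π₁, h₁⟩ ⟨π₂, h₂⟩
    have : π₁ = π₂ := Subsingleton.elim _ _
    simp [this]
  · exact ⟨1, fun a => absurd a.2 (by omega)⟩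

lemma master_count (n k : ℕ) (hk : 1 ≤ k) (hn : 1 ≤ n) :
    smallestComponent k n = ∑ c ∈ Finset.Icc 1 n, n.choose c * (allK k c * gtK k (n - c)) := by
  classical
  rw [smallestComponent_eq_card hn k]
  set Fs : Equiv.Perm (Fin n) → Finset (Fin n) :=
    fun σ => Finset.univ.filter (fun x => Function.minimalPeriod ⇑σ x = k) with hFs
  have hmap : ∀ σ ∈ Finset.univ.filter (fun σ : Equiv.Perm (Fin n) => mpf σ = k),
      Fs σ ∈ (Finset.univ : Finset (Finset (Fin n))) := fun _ _ => Finset.mem_univ _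
  rw [Finset.card_eq_sum_card_fiberwise hmap]
  have key : ∀ s : Finset (Fin n),
      (((Finset.univ.filter fun σ : Equiv.Perm (Fin n) => mpf σ = k)).filter
        fun σ => Fs σ = s).card
      = if s.Nonempty then allK k s.card * gtK k (n - s.card) else 0 := by
    intro s
    rw [Finset.filter_filter]
    by_cases hs : s.Nonempty
    · rw [if_pos hs]
      have hiff : ∀ σ : Equiv.Perm (Fin n), (mpf σ = k ∧ Fs σ = s) ↔
          ((∀ x ∈ s, Function.minimalPeriod ⇑σ x = k) ∧
           (∀ x ∉ s, k < Function.minimalPeriod ⇑σ x)) := by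
        intro σ
        constructor
        · rintro ⟨h1, h2⟩
          constructor
          · intro x hx
            rw [← h2, hFs, Finset.mem_filter] at hx
            exact hx.2
          · intro x hx
            rw [← h2, hFs, Finset.mem_filter] at hx
            push_neg at hx
            have hne := hx (Finset.mem_univ x)
            have hge : k ≤ Function.minimalPeriod ⇑σ x := h1 ▸ mpf_le hn σ x
            omega
        · rintro ⟨h1, h2⟩
          obtain ⟨x0, hx0⟩ := hs
          have hall : ∀ x, k ≤ Function.minimalPeriod ⇑σ x := by
            intro x
            by_cases hx : x ∈ s
            · exact (h1 x hx).ge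
            · exact (h2 x hx).le
          constructor
          · apply le_antisymm
            · rw [← h1 x0 hx0]; exact mpf_le hn σ x0
            · exact le_csInf ⟨_, ⟨⟨0, hn⟩, rfl⟩⟩ (by rintro b ⟨x, rfl⟩; exact hall x)
          · ext x
            rw [hFs, Finset.mem_filter]
            constructor
            · rintro ⟨_, hx⟩
              by_contra hxs
              have := h2 x hxs
              omega
            · intro hx
              exact ⟨Finset.mem_univ x, h1 x hx⟩
      rw [Finset.filter_congr (fun σ _ => hiff σ)]
      have hcard : (Finset.univ.filter fun σ : Equiv.Perm (Fin n) =>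
          (∀ x ∈ s, Function.minimalPeriod ⇑σ x = k) ∧
          (∀ x ∉ s, k < Function.minimalPeriod ⇑σ x)).card
          = Nat.card {σ : Equiv.Perm (Fin n) // (∀ x ∈ s, Function.minimalPeriod ⇑σ x = k) ∧
            (∀ x ∉ s, k < Function.minimalPeriod ⇑σ x)} := by
        rw [Nat.card_eq_fintype_card]
        exact (Fintype.card_subtype _).symm
      rw [hcard, Nat.card_congr (decompEquiv k s), Nat.card_prod]
      congr 1
      · have e1 : {x : Fin n // x ∈ s} ≃ Fin s.card :=
          Fintype.equivFinOfCardEq (by simp)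
        have := card_perm_pred (fun d => d = k) e1
        rw [allK, ← this]
      · have e2 : {x : Fin n // ¬ x ∈ s} ≃ Fin (n - s.card) :=
          Fintype.equivFinOfCardEq (by rw [Fintype.card_subtype_compl]; simp)
        have := card_perm_pred (fun d => k < d) e2
        rw [gtK, ← this]
    · rw [if_neg hs, Finset.card_eq_zero, Finset.filter_eq_empty_iff]
      intro σ _
      rintro ⟨h1, h2⟩
      obtain ⟨x, hx⟩ := mpf_exists hn σ
      have : x ∈ Fs σ := by
        rw [hFs, Finset.mem_filter]
        exact ⟨Finset.mem_univ x, hx.trans h1⟩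
      rw [h2] at this
      exact hs ⟨x, this⟩
  rw [Finset.sum_congr rfl (fun s _ => key s)]
  have hmap2 : ∀ s ∈ (Finset.univ : Finset (Finset (Fin n))), s.card ∈ Finset.Icc 0 n :=
    fun s _ => Finset.mem_Icc.mpr ⟨Nat.zero_le _, by simpa using Finset.card_le_univ s⟩
  rw [← Finset.sum_fiberwise_of_maps_to hmap2]
  have hIcc : Finset.Icc 0 n = insert 0 (Finset.Icc 1 n) := by
    ext c; simp [Finset.mem_Icc]; omega
  rw [hIcc, Finset.sum_insert (by simp)]
  have hzero : ∑ s ∈ Finset.univ.filter (fun s : Finset (Fin n) => s.card = 0),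
      (if s.Nonempty then allK k s.card * gtK k (n - s.card) else 0) = 0 := by
    apply Finset.sum_eq_zero
    intro s hs
    rw [Finset.mem_filter] at hs
    rw [if_neg (by rw [Finset.nonempty_iff_ne_empty]; simp [Finset.card_eq_zero.mp hs.2])]
  rw [hzero, zero_add]
  apply Finset.sum_congr rfl
  intro c hc
  rw [Finset.mem_Icc] at hc
  have hfil : Finset.univ.filter (fun s : Finset (Fin n) => s.card = c) =
      Finset.powersetCard c Finset.univ := by
    rw [Finset.powersetCard_eq_filter, Finset.powerset_univ]
  rw [hfil]
  have : ∀ s ∈ Finset.powersetCard c (Finset.univ : Finset (Fin n)),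
      (if s.Nonempty then allK k s.card * gtK k (n - s.card) else 0)
      = allK k c * gtK k (n - c) := by
    intro s hs
    rw [Finset.mem_powersetCard] at hs
    rw [if_pos (Finset.card_pos.mp (hs.2 ▸ hc.1)), hs.2]
  rw [Finset.sum_congr rfl this, Finset.sum_const, smul_eq_mul, Finset.card_powersetCard]
  simp






theorem smallestComponent_recurrence (n k : ℕ) (hk : 1 ≤ k) (hkn : k ≤ n) :
    (smallestComponent k n : ℚ) =
      (∑ i ∈ Finset.Icc 1 (n / k),
        ((n.factorial : ℚ) / ((k : ℚ) ^ i * i.factorial * (n - k * i).factorial)) *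
          ∑ j ∈ Finset.Icc (k + 1) (n - k * i), (smallestComponent j (n - k * i) : ℚ))
      + (if k ∣ n then (n.factorial : ℚ) / ((n / k).factorial * (k : ℚ) ^ (n / k)) else 0) := by
  have hn : 1 ≤ n := le_trans hk hkn
  have hk0 : 0 < k := hk
  have hq1 : 1 ≤ n / k := (Nat.one_le_div_iff hk0).mpr hkn
  have hmul_le : ∀ i, i ≤ n / k → k * i ≤ n := by
    intro i hi
    calc k * i ≤ k * (n / k) := Nat.mul_le_mul_left k hi
      _ ≤ n := by rw [mul_comm]; exact Nat.div_mul_le_self n k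
  -- ℕ identity, reindexed over multiples of k
  have hN : smallestComponent k n
      = ∑ i ∈ Finset.Icc 1 (n / k), n.choose (k * i) * (allK k (k * i) * gtK k (n - k * i)) := by
    rw [master_count n k hk hn]
    rw [show Finset.Icc 1 n = Finset.Icc 1 n from rfl]
    have hsub : (Finset.Icc 1 (n / k)).image (fun i => k * i) ⊆ Finset.Icc 1 n := by
      intro c hc
      rw [Finset.mem_image] at hc
      obtain ⟨i, hi, rfl⟩ := hc
      rw [Finset.mem_Icc] at hi ⊢
      exact ⟨Nat.one_le_iff_ne_zero.mpr (Nat.mul_ne_zero (by omega) (by omega)), hmul_le i hi.2⟩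
    rw [← Finset.sum_subset hsub]
    · rw [Finset.sum_image (fun a _ b _ h => Nat.eq_of_mul_eq_mul_left hk0 h)]
    · intro c hc hcim
      rw [Finset.mem_Icc] at hc
      have hnd : ¬ k ∣ c := by
        intro ⟨d, hd⟩
        apply hcim
        rw [Finset.mem_image]
        refine ⟨d, Finset.mem_Icc.mpr ⟨?_, ?_⟩, hd.symm⟩
        · rcases Nat.eq_zero_or_pos d with h0 | h1
          · exfalso; subst h0; simp at hd; omega
          · exact h1
        · subst hd; exact Nat.le_div_iff_mul_le hk0 |>.mpr (by rw [mul_comm]; exact hc.2)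
      rw [allK_not_dvd k c hk hnd]
      ring
  -- coefficient identity in ℚ
  have hfacne : ∀ m : ℕ, (m.factorial : ℚ) ≠ 0 := fun m => Nat.cast_ne_zero.mpr m.factorial_ne_zero
  have hkne : (k : ℚ) ≠ 0 := Nat.cast_ne_zero.mpr (by omega)
  have coeff_eq : ∀ i, k * i ≤ n →
      ((n.factorial : ℚ) / ((k : ℚ) ^ i * i.factorial * (n - k * i).factorial))
        = (n.choose (k * i) : ℚ) * allK k (k * i) := by
    intro i hki
    rw [div_eq_iff (by positivity)]
    symm
    have h1 : (n.choose (k * i) * (k * i).factorial * (n - k * i).factorial : ℚ)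
        = (n.factorial : ℚ) := by
      exact_mod_cast congrArg (Nat.cast : ℕ → ℚ) (Nat.choose_mul_factorial_mul_factorial hki)
    have h2 : (allK k (k * i) : ℚ) * ((k : ℚ) ^ i * i.factorial) = ((k * i).factorial : ℚ) := by
      exact_mod_cast congrArg (Nat.cast : ℕ → ℚ) (allK_mul_eq k hk i)
    calc (n.choose (k * i) : ℚ) * allK k (k * i) * ((k:ℚ) ^ i * i.factorial * (n - k * i).factorial)
        = (n.choose (k * i) : ℚ) * ((allK k (k * i) : ℚ) * ((k : ℚ) ^ i * i.factorial))
            * (n - k * i).factorial := by ring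
      _ = (n.choose (k * i) : ℚ) * (k * i).factorial * (n - k * i).factorial := by rw [h2]
      _ = n.factorial := h1
  -- the T term
  set T : ℚ := (n.factorial : ℚ) / ((n / k).factorial * (k : ℚ) ^ (n / k)) with hT
  -- per-i identity
  have per_i : ∀ i ∈ Finset.Icc 1 (n / k),
      ((n.factorial : ℚ) / ((k : ℚ) ^ i * i.factorial * (n - k * i).factorial)) *
          (∑ j ∈ Finset.Icc (k + 1) (n - k * i), (smallestComponent j (n - k * i) : ℚ))
      = (n.choose (k * i) * (allK k (k * i) * gtK k (n - k * i)) : ℕ)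
        - (if k ∣ n ∧ i = n / k then T else 0) := by
    intro i hi
    rw [Finset.mem_Icc] at hi
    have hki := hmul_le i hi.2
    by_cases hcase : k ∣ n ∧ i = n / k
    · obtain ⟨hdvd, rfl⟩ := hcase
      have hzero : n - k * (n / k) = 0 := by
        rw [Nat.mul_div_cancel' hdvd]; omega
      rw [if_pos ⟨hdvd, rfl⟩, hzero]
      rw [gtK_zero]
      have hsum0 : Finset.Icc (k + 1) 0 = ∅ := by
        apply Finset.Icc_eq_empty; omega
      rw [hsum0, Finset.sum_empty, mul_zero]
      have : ((n.choose (k * (n / k)) * (allK k (k * (n / k)) * 1) : ℕ) : ℚ)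
          = (n.factorial : ℚ) / ((k : ℚ) ^ (n / k) * (n / k).factorial * (n - k * (n / k)).factorial) := by
        rw [mul_one]
        push_cast
        rw [coeff_eq (n / k) hki]
      rw [this, hzero]
      rw [hT]
      simp [Nat.factorial_zero]
      ring
    · rw [if_neg hcase]
      have hge1 : 1 ≤ n - k * i := by
        by_cases hiq : i = n / k
        · subst hiq
          have hne : k * (n / k) ≠ n := by
            intro hc
            exact hcase ⟨⟨n / k, hc.symm⟩, rfl⟩
          omega
        · have : i + 1 ≤ n / k := by omega
          have := hmul_le (i + 1) this
          have hkk : k * i + k ≤ n := by rw [Nat.mul_succ] at this; omega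
          omega
      rw [gtK_eq_sum hge1 k]
      rw [sub_zero, coeff_eq i hki]
      push_cast
      ring
  rw [Finset.sum_congr rfl per_i, Finset.sum_sub_distrib]
  have hite : ∑ i ∈ Finset.Icc 1 (n / k), (if k ∣ n ∧ i = n / k then T else 0)
      = if k ∣ n then T else 0 := by
    by_cases hdvd : k ∣ n
    · rw [if_pos hdvd]
      have hcongr : ∀ i ∈ Finset.Icc 1 (n / k),
          (if k ∣ n ∧ i = n / k then T else 0) = (if i = n / k then T else 0) := by
        intro i _; simp [hdvd]
      rw [Finset.sum_congr rfl hcongr,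
        Finset.sum_ite_eq' (Finset.Icc 1 (n / k)) (n / k)]
      rw [if_pos (Finset.mem_Icc.mpr ⟨hq1, le_refl _⟩)]
    · rw [if_neg hdvd]
      apply Finset.sum_eq_zero
      intro i _
      rw [if_neg (fun h => hdvd h.1)]
  rw [hite, hN]
  push_cast
  ring
end

section
/- Suppose the Buchstab function satisfies ω(n + (1+z)/2) = Σ_{i≥0} c_{n,i} z^i and ω(n+1 + (1+z)/2) = Σ_{i≥0} c_{n+1,i} z^i for z ∈ [−1,1), for some integer n ≥ 1, with both power series absolutely convergent on [−1,1]. Then the coefficients satisfy c_{n+1,0} = (1/(2n+3)) · Σ_{i≥0} c_{n,i} · (2(n+1) + (−1)^i/(i+1)), and for i ≥ 1, (2n+3)·c_{n+1,i} + c_{n+1,i−1} = c_{n,i−1}/i. -/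
open Set Filter Topology
open scoped NNReal ENNReal

private def consF (x : ℝ) (f : ℕ → ℝ) : ℕ → ℝ
  | 0 => x
  | j+1 => f j

@[simp] private lemma consF_zero (x : ℝ) (f : ℕ → ℝ) : consF x f 0 = x := rfl
@[simp] private lemma consF_succ (x : ℝ) (f : ℕ → ℝ) (j : ℕ) : consF x f (j+1) = f j := rfl

private lemma summable_mul_pow {a : ℕ → ℝ} (ha : Summable fun i => |a i|) {z : ℝ}
    (hz : |z| ≤ 1) (e : ℕ → ℕ) : Summable fun i => a i * z ^ (e i) := by
  refine Summable.of_norm_bounded ha fun i => ?_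
  rw [Real.norm_eq_abs, abs_mul, abs_pow]
  calc |a i| * |z| ^ (e i) ≤ |a i| * 1 := by
        gcongr
        exact pow_le_one₀ (abs_nonneg z) hz
    _ = |a i| := mul_one _

private lemma continuousOn_tsum_pow {a : ℕ → ℝ} (ha : Summable fun i => |a i|) (e : ℕ → ℕ) :
    ContinuousOn (fun z : ℝ => ∑' i, a i * z ^ (e i)) (Icc (-1) 1) := by
  have hφc : Continuous fun z : ℝ => max (-1) (min 1 z) :=
    continuous_const.max (continuous_const.min continuous_id)
  have hφ1 : ∀ z : ℝ, |max (-1 : ℝ) (min 1 z)| ≤ 1 := by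
    intro z
    rw [abs_le]
    exact ⟨le_max_left _ _, max_le (by norm_num) (min_le_left _ _)⟩
  have hcont : Continuous fun z : ℝ => ∑' i, a i * (max (-1) (min 1 z)) ^ (e i) := by
    refine continuous_tsum (fun i => continuous_const.mul (hφc.pow _)) ha fun i z => ?_
    rw [Real.norm_eq_abs, abs_mul, abs_pow]
    calc |a i| * |max (-1 : ℝ) (min 1 z)| ^ (e i) ≤ |a i| * 1 := by
          gcongr
          exact pow_le_one₀ (abs_nonneg _) (hφ1 z)
      _ = |a i| := mul_one _
  refine hcont.continuousOn.congr fun z hz => ?_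
  have h1 : max (-1 : ℝ) (min 1 z) = z := by
    rw [min_eq_right hz.2, max_eq_right hz.1]
  simp only [h1]

set_option maxHeartbeats 1000000 in
private lemma hasFPowerSeriesAt_tsum {a : ℕ → ℝ} (ha : Summable fun i => |a i|) :
    HasFPowerSeriesAt (fun z => ∑' i, a i * z ^ i) (FormalMultilinearSeries.ofScalars ℝ a) 0 := by
  refine ⟨1, ?_, one_pos, ?_⟩
  · have h2 : Summable fun n => ‖FormalMultilinearSeries.ofScalars ℝ a n‖ * ((1:ℝ≥0):ℝ) ^ n := by
      refine ha.congr fun n => ?_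
      rw [FormalMultilinearSeries.ofScalars_norm, Real.norm_eq_abs]
      norm_num
    have h3 := FormalMultilinearSeries.le_radius_of_summable_norm _ h2
    simpa using h3
  · intro y hy
    have h1 : (‖y‖₊ : ℝ≥0∞) < 1 := mem_emetric_ball_zero_iff.mp hy
    have h2 : ‖y‖₊ < 1 := by exact_mod_cast h1
    have hy1 : |y| ≤ 1 := by
      have h3 : ‖y‖ < 1 := h2
      simpa [Real.norm_eq_abs] using h3.le
    have h4 := (summable_mul_pow ha hy1 (fun i => i)).hasSum
    have h5 : ∀ n : ℕ, FormalMultilinearSeries.ofScalars ℝ a n (fun _ => y) = a n * y ^ n := by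
      intro n
      rw [FormalMultilinearSeries.ofScalars_apply_eq, smul_eq_mul]
    rw [zero_add]
    exact HasSum.congr_fun h4 fun n => h5 n

set_option maxHeartbeats 1000000 in
private lemma coeff_eq_of_tsum_eq {a b : ℕ → ℝ} (ha : Summable fun i => |a i|)
    (hb : Summable fun i => |b i|)
    (h : ∀ z ∈ Ioo (-1 : ℝ) 1, ∑' i, a i * z ^ i = ∑' i, b i * z ^ i) : a = b := by
  have hA := hasFPowerSeriesAt_tsum ha
  have hB := hasFPowerSeriesAt_tsum hb
  have hev : (fun z => ∑' i, b i * z ^ i) =ᶠ[𝓝 (0:ℝ)] fun z => ∑' i, a i * z ^ i := by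
    filter_upwards [Ioo_mem_nhds (by norm_num : (-1:ℝ) < 0) (by norm_num : (0:ℝ) < 1)] with z hz
    exact (h z hz).symm
  have h2 := (hB.congr hev).eq_formalMultilinearSeries hA
  exact ((FormalMultilinearSeries.ofScalars_series_eq_iff ℝ b a).mp h2).symm

private lemma tsum_consF {f : ℕ → ℝ} {x z : ℝ} (h : Summable fun i => consF x f i * z ^ i) :
    ∑' i, consF x f i * z ^ i = x + z * ∑' j, f j * z ^ j := by
  rw [Summable.tsum_eq_zero_add h]
  simp only [consF_zero, consF_succ, pow_zero, mul_one]
  congr 1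
  rw [← tsum_mul_left]
  exact tsum_congr fun j => by rw [pow_succ]; ring

private lemma summable_abs_consF {f : ℕ → ℝ} (x : ℝ) (h : Summable fun j => |f j|) :
    Summable fun i => |consF x f i| := by
  refine (summable_nat_add_iff 1).mp ?_
  simpa [consF_succ] using h

set_option maxHeartbeats 1000000 in
theorem buchstab_taylor_recurrence (ω : ℝ → ℝ)
    (hcont : ContinuousOn ω (Set.Ici 1))
    (hinit : ∀ x ∈ Set.Icc (1 : ℝ) 2, ω x = 1 / x)
    (hode : ∀ x : ℝ, 2 < x → HasDerivAt (fun y => y * ω y) (ω (x - 1)) x)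
    (n : ℕ) (hn : 1 ≤ n) (c d : ℕ → ℝ)
    (hc : Summable fun i => |c i|) (hd : Summable fun i => |d i|)
    (hcrep : ∀ z ∈ Set.Ico (-1 : ℝ) 1,
      ω ((n : ℝ) + (1 + z) / 2) = ∑' i : ℕ, c i * z ^ i)
    (hdrep : ∀ z ∈ Set.Ico (-1 : ℝ) 1,
      ω ((n : ℝ) + 1 + (1 + z) / 2) = ∑' i : ℕ, d i * z ^ i) :
    d 0 = (1 / (2 * (n : ℝ) + 3)) *
        ∑' i : ℕ, c i * (2 * ((n : ℝ) + 1) + (-1 : ℝ) ^ i / ((i : ℝ) + 1)) ∧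
      ∀ i : ℕ, 1 ≤ i →
        (2 * (n : ℝ) + 3) * d i + d (i - 1) = c (i - 1) / (i : ℝ) := by
  have hn1 : (1:ℝ) ≤ (n:ℝ) := by exact_mod_cast hn
  have hQs : Summable (fun i : ℕ => c i * (-1:ℝ)^i / ((i:ℝ)+1)) := by
    refine Summable.of_norm_bounded hc fun i => ?_
    rw [Real.norm_eq_abs, abs_div, abs_mul, abs_pow, abs_neg, abs_one, one_pow, mul_one,
      abs_of_nonneg (by positivity : (0:ℝ) ≤ (i:ℝ)+1)]
    exact div_le_self (abs_nonneg _) (by linarith [(Nat.cast_nonneg i : (0:ℝ) ≤ (i:ℝ))])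
  have hmem1 : (1:ℝ) ∈ Icc (-1:ℝ) 1 := by norm_num
  haveI hNB : (𝓝[Ico (-1:ℝ) 1] (1:ℝ)).NeBot := by
    apply mem_closure_iff_nhdsWithin_neBot.mp
    rw [closure_Ico (by norm_num : (-1:ℝ) ≠ 1)]
    exact hmem1
  have hS : ω ((n:ℝ)+1) = ∑' i, c i := by
    have hF0 : Tendsto (fun z : ℝ => ∑' i, c i * z ^ i) (𝓝[Ico (-1:ℝ) 1] 1)
        (𝓝 (∑' i, c i * (1:ℝ) ^ i)) :=
      ((continuousOn_tsum_pow hc (fun i => i)).continuousWithinAt hmem1).mono_left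
        (nhdsWithin_mono _ Ico_subset_Icc_self)
    have hF : Tendsto (fun z : ℝ => ∑' i, c i * z ^ i) (𝓝[Ico (-1:ℝ) 1] 1) (𝓝 (∑' i, c i)) := by
      simpa using hF0
    have hl : Continuous fun z : ℝ => (n:ℝ) + (1+z)/2 := by continuity
    have hmaps : MapsTo (fun z : ℝ => (n:ℝ) + (1+z)/2) (Icc (-1:ℝ) 1) (Ici (1:ℝ)) := by
      intro z hz
      simp only [mem_Ici]
      have := hz.1
      nlinarith
    have hG0 : Tendsto (fun z : ℝ => ω ((n:ℝ) + (1+z)/2)) (𝓝[Ico (-1:ℝ) 1] 1)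
        (𝓝 (ω ((n:ℝ) + (1+(1:ℝ))/2))) :=
      ((hcont.comp hl.continuousOn hmaps).continuousWithinAt hmem1).mono_left
        (nhdsWithin_mono _ Ico_subset_Icc_self)
    have harg : (n:ℝ) + (1+(1:ℝ))/2 = (n:ℝ)+1 := by norm_num
    rw [harg] at hG0
    have hGF : Tendsto (fun z : ℝ => ∑' i, c i * z ^ i) (𝓝[Ico (-1:ℝ) 1] 1)
        (𝓝 (ω ((n:ℝ)+1))) := by
      refine hG0.congr' ?_
      filter_upwards [self_mem_nhdsWithin] with z hz
      exact hcrep z hz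
    exact tendsto_nhds_unique hGF hF
  have haΦ : Summable (fun i : ℕ => |c i / (2*((i:ℝ)+1))|) := by
    refine Summable.of_nonneg_of_le (fun i => abs_nonneg _) (fun i => ?_) hc
    rw [abs_div, abs_of_nonneg (by positivity : (0:ℝ) ≤ 2*((i:ℝ)+1))]
    exact div_le_self (abs_nonneg _) (by linarith [(Nat.cast_nonneg i : (0:ℝ) ≤ (i:ℝ))])
  set Φ : ℝ → ℝ := fun z => ∑' i, c i / (2*((i:ℝ)+1)) * z ^ (i+1) with hΦdef
  set H : ℝ → ℝ := fun z => ((n:ℝ)+1+(1+z)/2) * ω ((n:ℝ)+1+(1+z)/2) with hHdef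
  have hΦderiv : ∀ z ∈ Ioo (-1:ℝ) 1, HasDerivAt Φ (∑' i, c i * z ^ i / 2) z := by
    intro z hz
    have h := hasDerivAt_tsum_of_isPreconnected (u := fun i => |c i| / 2)
      (F := ℝ) (𝕜 := ℝ)
      (g := fun i y => c i / (2*((i:ℝ)+1)) * y ^ (i+1))
      (g' := fun i y => c i * y ^ i / 2) (y₀ := 0) (hc.div_const 2)
      isOpen_Ioo isPreconnected_Ioo ?_ ?_ (by norm_num) ?_ hz
    · exact h
    · intro i y _
      have h1 : ((i:ℝ)+1) ≠ 0 := by positivity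
      have hp := (hasDerivAt_pow (i+1) y).const_mul (c i / (2*((i:ℝ)+1)))
      convert hp using 1
      · rfl
      have h2 : (i+1-1 : ℕ) = i := by omega
      rw [h2]
      push_cast
      field_simp
    · intro i y hy
      have hy1 : |y| ≤ 1 := abs_le.mpr ⟨hy.1.le, hy.2.le⟩
      rw [Real.norm_eq_abs, abs_div, abs_mul, abs_pow, abs_two]
      have h3 : |y| ^ i ≤ 1 := pow_le_one₀ (abs_nonneg _) hy1
      calc |c i| * |y| ^ i / 2 ≤ |c i| * 1 / 2 := by gcongr
        _ = |c i| / 2 := by ring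
    · refine (summable_zero (β := ℕ)).congr fun i => ?_
      simp
  have hHderiv : ∀ z ∈ Ioo (-1:ℝ) 1, HasDerivAt H (∑' i, c i * z ^ i / 2) z := by
    intro z hz
    have hx : 2 < (n:ℝ)+1+(1+z)/2 := by nlinarith [hz.1]
    have hd1 := hode _ hx
    have hl : HasDerivAt (fun z : ℝ => (n:ℝ)+1+(1+z)/2) ((1:ℝ)/2) z := by
      have h0 : HasDerivAt (fun z : ℝ => z) 1 z := hasDerivAt_id z
      simpa using (((h0.const_add (1:ℝ)).div_const 2).const_add ((n:ℝ)+1))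
    have hcomp := HasDerivAt.comp z hd1 hl
    have hval : ω ((n:ℝ)+1+(1+z)/2 - 1) * (1/2) = ∑' i, c i * z ^ i / 2 := by
      have harg : (n:ℝ)+1+(1+z)/2 - 1 = (n:ℝ) + (1+z)/2 := by ring
      rw [harg, hcrep z ⟨hz.1.le, hz.2⟩, tsum_div_const, mul_one_div]
    rw [hval] at hcomp
    exact hcomp
  have hΦcont : ContinuousOn Φ (Icc (-1:ℝ) 1) := continuousOn_tsum_pow haΦ (fun i => i+1)
  have hHcont : ContinuousOn H (Icc (-1:ℝ) 1) := by
    have hl : Continuous fun z : ℝ => (n:ℝ)+1+(1+z)/2 := by continuity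
    have hmaps : MapsTo (fun z : ℝ => (n:ℝ)+1+(1+z)/2) (Icc (-1:ℝ) 1) (Ici (1:ℝ)) := by
      intro z hz
      simp only [mem_Ici]
      have := hz.1
      nlinarith
    exact hl.continuousOn.mul (hcont.comp hl.continuousOn hmaps)
  have hconst : ∀ z ∈ Ioo (-1:ℝ) 1, H z - Φ z = H 0 - Φ 0 := by
    intro z hz
    have hcsub : ContinuousOn (fun y => H y - Φ y) (Icc (-1:ℝ) 1) := hHcont.sub hΦcont
    rcases le_or_gt 0 z with h0 | h0
    · have h := constant_of_has_deriv_right_zero (f := fun y => H y - Φ y) (a := 0) (b := z)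
        (hcsub.mono (Icc_subset_Icc (by norm_num) hz.2.le)) ?_
      · exact h z (right_mem_Icc.mpr h0)
      · intro x hx
        have hxI : x ∈ Ioo (-1:ℝ) 1 := ⟨by linarith [hx.1], by linarith [hx.2, hz.2]⟩
        have h2 := (hHderiv x hxI).sub (hΦderiv x hxI)
        exact (by simpa using h2.hasDerivWithinAt : HasDerivWithinAt (H - Φ) 0 (Ici x) x)
    · have h := constant_of_has_deriv_right_zero (f := fun y => H y - Φ y) (a := z) (b := 0)
        (hcsub.mono (Icc_subset_Icc hz.1.le (by norm_num))) ?_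
      · exact (h 0 (right_mem_Icc.mpr h0.le)).symm
      · intro x hx
        have hxI : x ∈ Ioo (-1:ℝ) 1 := ⟨by linarith [hx.1, hz.1], by linarith [hx.2]⟩
        have h2 := (hHderiv x hxI).sub (hΦderiv x hxI)
        exact (by simpa using h2.hasDerivWithinAt : HasDerivWithinAt (H - Φ) 0 (Ici x) x)
  haveI hNB' : (𝓝[Ioo (-1:ℝ) 1] (-1:ℝ)).NeBot := by
    apply mem_closure_iff_nhdsWithin_neBot.mp
    rw [closure_Ioo (by norm_num : (-1:ℝ) ≠ 1)]
    norm_num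
  have hK : H 0 - Φ 0 = H (-1) - Φ (-1) := by
    have h1 : Tendsto (fun y => H y - Φ y) (𝓝[Ioo (-1:ℝ) 1] (-1)) (𝓝 (H (-1) - Φ (-1))) :=
      ((hHcont.sub hΦcont).continuousWithinAt (by norm_num : (-1:ℝ) ∈ Icc (-1:ℝ) 1)).mono_left
        (nhdsWithin_mono _ Ioo_subset_Icc_self)
    have h2 : Tendsto (fun y => H y - Φ y) (𝓝[Ioo (-1:ℝ) 1] (-1)) (𝓝 (H 0 - Φ 0)) := by
      refine Tendsto.congr' ?_ tendsto_const_nhds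
      filter_upwards [self_mem_nhdsWithin] with y hy
      exact (hconst y hy).symm
    exact tendsto_nhds_unique h2 h1
  set Q : ℝ := ∑' i, c i * (-1:ℝ)^i / ((i:ℝ)+1) with hQdef
  set S : ℝ := ∑' i, c i with hSdef
  have hHm1 : H (-1) = ((n:ℝ)+1) * S := by
    show ((n:ℝ)+1+(1+(-1:ℝ))/2) * ω ((n:ℝ)+1+(1+(-1:ℝ))/2) = ((n:ℝ)+1) * S
    have harg : (n:ℝ)+1+(1+(-1:ℝ))/2 = (n:ℝ)+1 := by norm_num
    rw [harg, hS]
  have hΦm1 : Φ (-1) = -Q / 2 := by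
    show (∑' i, c i / (2*((i:ℝ)+1)) * (-1:ℝ) ^ (i+1)) = -Q / 2
    have h1 : ∀ i : ℕ, c i / (2*((i:ℝ)+1)) * (-1:ℝ) ^ (i+1)
        = -(c i * (-1:ℝ)^i / ((i:ℝ)+1)) / 2 := by
      intro i
      rw [pow_succ, mul_comm (2:ℝ) ((i:ℝ)+1), ← div_div]
      ring
    rw [tsum_congr h1, tsum_div_const, tsum_neg, hQdef]
  set a : ℕ → ℝ := fun i => (2*(n:ℝ)+3) * d i + consF 0 d i with hadef
  set b : ℕ → ℝ := consF ((2*(n:ℝ)+2) * S + Q) (fun j => c j / ((j:ℝ)+1)) with hbdef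
  have hsd : Summable fun i : ℕ => |consF 0 d i| := summable_abs_consF 0 hd
  have hsa : Summable fun i => |a i| := by
    have h1 : Summable fun i : ℕ => |(2*(n:ℝ)+3) * d i| := by
      simpa [abs_mul] using hd.mul_left |2*(n:ℝ)+3|
    refine Summable.of_nonneg_of_le (fun i => abs_nonneg _) (fun i => ?_) (h1.add hsd)
    exact abs_add_le _ _
  have hsb : Summable fun i => |b i| := by
    refine summable_abs_consF _ ?_
    refine Summable.of_nonneg_of_le (fun j => abs_nonneg _) (fun j => ?_) hc
    rw [abs_div, abs_of_nonneg (by positivity : (0:ℝ) ≤ (j:ℝ)+1)]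
    exact div_le_self (abs_nonneg _) (by linarith [(Nat.cast_nonneg j : (0:ℝ) ≤ (j:ℝ))])
  have hkey : ∀ z ∈ Ioo (-1:ℝ) 1, ∑' i, a i * z ^ i = ∑' i, b i * z ^ i := by
    intro z hz
    have hz1 : |z| ≤ 1 := abs_le.mpr ⟨hz.1.le, hz.2.le⟩
    have hP := hdrep z ⟨hz.1.le, hz.2⟩
    have hsum1 : Summable fun i => (2*(n:ℝ)+3) * (d i * z ^ i) :=
      (summable_mul_pow hd hz1 (fun i => i)).mul_left _
    have hsum2 : Summable fun i : ℕ => consF 0 d i * z ^ i := summable_mul_pow hsd hz1 (fun i => i)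
    have hA : ∑' i, a i * z ^ i = (2*(n:ℝ)+3+z) * ∑' i, d i * z ^ i := by
      have e1 : ∑' i, a i * z ^ i
          = ∑' i, ((2*(n:ℝ)+3) * (d i * z ^ i) + consF 0 d i * z ^ i) := by
        refine tsum_congr fun i => ?_
        simp only [hadef]
        ring
      rw [e1, Summable.tsum_add hsum1 hsum2, tsum_mul_left, tsum_consF hsum2]
      ring
    have hB : ∑' i, b i * z ^ i = (2*(n:ℝ)+2) * S + Q + 2 * Φ z := by
      have hsb2 : Summable fun i : ℕ => b i * z ^ i := summable_mul_pow hsb hz1 (fun i => i)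
      rw [hbdef] at hsb2 ⊢
      rw [tsum_consF hsb2]
      have e2 : z * ∑' j, c j / ((j:ℝ)+1) * z ^ j = 2 * Φ z := by
        show z * _ = 2 * ∑' i, c i / (2*((i:ℝ)+1)) * z ^ (i+1)
        rw [← tsum_mul_left, ← tsum_mul_left]
        refine tsum_congr fun j => ?_
        rw [pow_succ, mul_comm (2:ℝ) ((j:ℝ)+1), ← div_div]
        ring
      rw [e2]
    have eH : H z = ((n:ℝ)+1+(1+z)/2) * ∑' i, d i * z ^ i := by
      show ((n:ℝ)+1+(1+z)/2) * ω ((n:ℝ)+1+(1+z)/2) = _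
      rw [hP]
    have e3 : H z - Φ z = ((n:ℝ)+1) * S + Q / 2 := by
      rw [hconst z hz, hK, hHm1, hΦm1]
      ring
    have e4 : (2*(n:ℝ)+3+z) * ∑' i, d i * z ^ i
        = 2 * (((n:ℝ)+1+(1+z)/2) * ∑' i, d i * z ^ i) := by ring
    rw [hA, hB, e4, ← eH]
    linarith [e3]
  have hab : a = b := coeff_eq_of_tsum_eq hsa hsb hkey
  constructor
  · have h0 := congrFun hab 0
    simp only [hadef, hbdef, consF_zero, add_zero] at h0
    have hrs : ∑' i : ℕ, c i * (2*((n:ℝ)+1) + (-1:ℝ)^i/((i:ℝ)+1)) = (2*(n:ℝ)+2) * S + Q := by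
      have h1 : Summable fun i : ℕ => c i * (2*((n:ℝ)+1)) :=
        (summable_abs_iff.mp hc).mul_right _
      have heq : ∀ i : ℕ, c i * (2*((n:ℝ)+1) + (-1:ℝ)^i/((i:ℝ)+1))
          = c i * (2*((n:ℝ)+1)) + c i * (-1:ℝ)^i/((i:ℝ)+1) := fun i => by ring
      rw [tsum_congr heq, Summable.tsum_add h1 hQs, tsum_mul_right, ← hSdef, ← hQdef]
      ring
    rw [hrs, ← h0]
    have hne : (2*(n:ℝ)+3) ≠ 0 := by positivity
    field_simp
  · intro i hi
    obtain ⟨j, rfl⟩ : ∃ j, i = j + 1 := ⟨i - 1, (Nat.succ_pred_eq_of_pos hi).symm⟩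
    have h1 := congrFun hab (j+1)
    simp only [hadef, hbdef, consF_succ] at h1
    have h2 : (j+1) - 1 = j := by omega
    rw [h2]
    push_cast
    exact h1
end

section
/- Suppose for some K > 0 and integer n ≥ 3 the generalized Buchstab function satisfies Ω_K(n−1 + (1+z)/2) = Σ_{i≥0} c_{n−1,i} z^i for z ∈ [−1,1), with the series absolutely convergent on [−1,1], and define α_i = Σ_{j=0}^{i} ((−1)^{i−j}/(2n−1)^{i−j})·c_{n−1,j}. Then Ω_K(n + (1+z)/2) = Σ_{i≥0} c_{n,i} z^i for z ∈ [−1,1), where c_{n,0} = Σ_{i≥0} c_{n−1,i} − (K/(2n−1))·Σ_{i≥0} (−1)^{i+1} α_i/(i+1) and c_{n,i} = K·α_{i−1}/((2n−1)·i) for i ≥ 1. -/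
open MeasureTheory intervalIntegral Set Filter

section GBaux


lemma gb_geom {b t : ℝ} (hb : 2 ≤ b) (ht : t ∈ Set.Icc (-1:ℝ) 1) :
    HasSum (fun i : ℕ => (-1:ℝ)^i * t^i / b^(i+1)) (1/(b+t)) := by
  have hb0 : (0:ℝ) < b := by linarith
  have hbt : (0:ℝ) < b + t := by have := ht.1; linarith
  have hr : |(-t)/b| < 1 := by
    rw [abs_div, abs_neg, abs_of_pos hb0, div_lt_one hb0]
    have h1 := abs_le.2 ⟨ht.1, ht.2⟩
    calc |t| ≤ 1 := h1
    _ < b := by linarith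
  have h := hasSum_geometric_of_abs_lt_one hr
  have h2 := h.mul_right (1/b)
  have hsum : (1 - -t/b)⁻¹ * (1/b) = 1/(b+t) := by
    have := hbt.ne'
    rw [neg_div, sub_neg_eq_add, one_add_div hb0.ne', inv_div]; field_simp
  rw [hsum] at h2
  have hfun : (fun i : ℕ => (-1:ℝ)^i * t^i / b^(i+1)) = fun i => (-t/b)^i * (1/b) := by
    funext i
    rw [div_pow, neg_pow, pow_succ]
    field_simp
    rw [one_pow, mul_one, ← mul_pow, neg_one_mul]
  rw [hfun]; exact h2

lemma gb_bound {b t : ℝ} (hb : 2 ≤ b) (habs : |t| ≤ 1) (i : ℕ) :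
    ‖(-1:ℝ)^i * t^i / b^(i+1)‖ ≤ (1/2)^i := by
  have hb0 : (0:ℝ) < b := by linarith
  have h1 : ‖(-1:ℝ)^i * t^i / b^(i+1)‖ = |t|^i / b^(i+1) := by
    rw [Real.norm_eq_abs, abs_div, abs_mul, abs_pow, abs_pow, abs_pow, abs_neg, abs_one,
      one_pow, one_mul, abs_of_pos hb0]
  rw [h1]
  calc |t|^i / b^(i+1) ≤ 1 / 2^(i+1) :=
        div_le_div₀ (by norm_num) (pow_le_one₀ (abs_nonneg t) habs) (by positivity)
          (pow_le_pow_left₀ (by norm_num) hb _)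
    _ = (1/2)^(i+1) := by rw [div_pow, one_pow]
    _ ≤ (1/2)^i := pow_le_pow_of_le_one (by norm_num) (by norm_num) (Nat.le_succ i)

lemma gb_sum_eq {b : ℝ} {c α : ℕ → ℝ} (hb : 2 ≤ b)
    (hα : ∀ i : ℕ, α i = ∑ j ∈ Finset.range (i + 1),
      ((-1 : ℝ) ^ (i - j) / b ^ (i - j)) * c j) (t : ℝ) (n : ℕ) :
    ∑ k ∈ Finset.range (n+1), (c k * t^k) * ((-1:ℝ)^(n-k) * t^(n-k) / b^((n-k)+1)) =
      α n / b * t^n := by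
  have hbne : b ≠ 0 := by intro h; rw [h] at hb; norm_num at hb
  rw [hα, Finset.sum_div, Finset.sum_mul]
  refine Finset.sum_congr rfl fun k hk => ?_
  have hk' : k ≤ n := Nat.lt_succ_iff.mp (Finset.mem_range.mp hk)
  have htp : t^n = t^k * t^(n-k) := by rw [← pow_add]; congr 1; omega
  rw [htp, pow_succ]
  have hbkne : b^(n-k) ≠ 0 := pow_ne_zero _ hbne
  field_simp

lemma gb_alpha_summable {b : ℝ} {c α : ℕ → ℝ} (hc : Summable fun j => |c j|) (hb : 2 ≤ b)
    (hα : ∀ i : ℕ, α i = ∑ j ∈ Finset.range (i + 1),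
      ((-1 : ℝ) ^ (i - j) / b ^ (i - j)) * c j) :
    Summable fun i => |α i| := by
  have hb0 : (0:ℝ) < b := by linarith
  have hbne : b ≠ 0 := ne_of_gt hb0
  have hg : Summable fun i : ℕ => ‖(-1:ℝ)^i * (1:ℝ)^i / b^(i+1)‖ :=
    Summable.of_nonneg_of_le (fun i => norm_nonneg _)
      (fun i => gb_bound hb (by norm_num) i) summable_geometric_two
  have hcn : Summable fun j => ‖c j * (1:ℝ)^j‖ := by
    simpa [Real.norm_eq_abs] using hc
  have h := summable_norm_sum_mul_range_of_summable_norm hcn hg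
  have heq : ∀ n : ℕ, ‖∑ k ∈ Finset.range (n+1),
      (c k * (1:ℝ)^k) * ((-1:ℝ)^(n-k) * (1:ℝ)^(n-k) / b^((n-k)+1))‖ = |α n| / b := by
    intro n
    rw [gb_sum_eq hb hα 1 n, one_pow, mul_one, Real.norm_eq_abs, abs_div, abs_of_pos hb0]
  rw [funext heq] at h
  have h2 := h.mul_right b
  refine h2.congr fun n => ?_
  exact div_mul_cancel₀ _ hbne

lemma gb_cauchy {b t : ℝ} {c α : ℕ → ℝ} (hc : Summable fun j => |c j|) (hb : 2 ≤ b)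
    (hα : ∀ i : ℕ, α i = ∑ j ∈ Finset.range (i + 1),
      ((-1 : ℝ) ^ (i - j) / b ^ (i - j)) * c j) (ht : t ∈ Set.Icc (-1:ℝ) 1) :
    (∑' j : ℕ, c j * t^j) * (1/(b+t)) = ∑' i : ℕ, α i / b * t^i := by
  have habs : |t| ≤ 1 := abs_le.2 ⟨ht.1, ht.2⟩
  have hf : Summable fun j : ℕ => ‖c j * t^j‖ := by
    apply hc.of_nonneg_of_le (fun j => norm_nonneg _) (fun j => ?_)
    rw [Real.norm_eq_abs, abs_mul, abs_pow]
    calc |c j| * |t|^j ≤ |c j| * 1 :=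
          mul_le_mul_of_nonneg_left (pow_le_one₀ (abs_nonneg t) habs) (abs_nonneg _)
      _ = |c j| := mul_one _
  have hg : Summable fun i : ℕ => ‖(-1:ℝ)^i * t^i / b^(i+1)‖ :=
    Summable.of_nonneg_of_le (fun i => norm_nonneg _)
      (fun i => gb_bound hb habs i) summable_geometric_two
  have hgeo := gb_geom hb ht
  rw [← hgeo.tsum_eq, tsum_mul_tsum_eq_tsum_sum_range_of_summable_norm hf hg]
  exact tsum_congr (gb_sum_eq hb hα t)


lemma gb_cont {c : ℕ → ℝ} (hc : Summable fun j => |c j|) :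
    ContinuousOn (fun t => ∑' j : ℕ, c j * t^j) (Set.Icc (-1:ℝ) 1) := by
  apply continuousOn_tsum (u := fun j => |c j|)
    (fun j => (continuous_const.mul (continuous_pow j)).continuousOn) hc
  intro j t ht
  have habs : |t| ≤ 1 := abs_le.2 ⟨ht.1, ht.2⟩
  rw [Real.norm_eq_abs]
  show |c j * t^j| ≤ |c j|
  rw [abs_mul, abs_pow]
  calc |c j| * |t|^j ≤ |c j| * 1 :=
        mul_le_mul_of_nonneg_left (pow_le_one₀ (abs_nonneg t) habs) (abs_nonneg _)
    _ = |c j| := mul_one _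

lemma gb_termwise_integral {a : ℕ → ℝ} (ha : Summable fun i => |a i|) {z : ℝ}
    (hz1 : -1 ≤ z) (hz2 : z ≤ 1) :
    ∫ t in (-1:ℝ)..z, (∑' i : ℕ, a i * t^i) =
      ∑' i : ℕ, a i * (z^(i+1) - (-1:ℝ)^(i+1)) / (i+1) := by
  rw [intervalIntegral.integral_of_le hz1]
  have hInt : ∀ i : ℕ, Integrable (fun t => a i * t^i)
      (volume.restrict (Set.Ioc (-1:ℝ) z)) := by
    intro i
    exact (Continuous.integrableOn_Ioc (continuous_const.mul (continuous_pow i)))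
  have hmes : volume (Set.Ioc (-1:ℝ) z) ≤ 2 := by
    rw [Real.volume_Ioc]
    exact ENNReal.ofReal_le_of_le_toReal (by simp; linarith)
  have hSum : Summable fun i : ℕ => ∫ t in Set.Ioc (-1:ℝ) z, ‖a i * t^i‖ := by
    apply (ha.mul_right 2).of_nonneg_of_le
      (fun i => integral_nonneg fun t => norm_nonneg _)
    intro i
    have hb : ∀ t ∈ Set.Ioc (-1:ℝ) z, ‖a i * t^i‖ ≤ |a i| := by
      intro t ht
      have habs : |t| ≤ 1 := abs_le.2 ⟨le_of_lt ht.1, le_trans ht.2 hz2⟩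
      rw [Real.norm_eq_abs, abs_mul, abs_pow]
      calc |a i| * |t|^i ≤ |a i| * 1 :=
            mul_le_mul_of_nonneg_left (pow_le_one₀ (abs_nonneg t) habs) (abs_nonneg _)
        _ = |a i| := mul_one _
    calc ∫ t in Set.Ioc (-1:ℝ) z, ‖a i * t^i‖
        ≤ ∫ _ in Set.Ioc (-1:ℝ) z, |a i| := by
          apply setIntegral_mono_on (hInt i).norm (integrableOn_const (ne_of_lt ?_))
            measurableSet_Ioc hb
          exact lt_of_le_of_lt hmes (by norm_num)
      _ = (volume (Set.Ioc (-1:ℝ) z)).toReal * |a i| := by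
          rw [setIntegral_const, smul_eq_mul, measureReal_def]
      _ ≤ 2 * |a i| := by
          apply mul_le_mul_of_nonneg_right _ (abs_nonneg _)
          exact ENNReal.toReal_le_of_le_ofReal (by norm_num) (by
            exact le_trans hmes (by norm_num [ENNReal.ofReal]))
      _ = |a i| * 2 := mul_comm _ _
  rw [← MeasureTheory.integral_tsum_of_summable_integral_norm hInt hSum]
  refine tsum_congr fun i => ?_
  rw [← intervalIntegral.integral_of_le hz1, intervalIntegral.integral_const_mul,
    integral_pow]
  rw [mul_div_assoc]


lemma gb_omega_cont {K M : ℝ} {Ω : ℝ → ℝ}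
    (h2 : ∀ x : ℝ, 2 ≤ x → Ω x = 1 + K * ∫ u in (2:ℝ)..x, Ω (u - 1) / (u - 1))
    (hM : 2 ≤ M)
    (hint : IntegrableOn (fun u => Ω (u - 1) / (u - 1)) (Set.Icc 2 M)) :
    ContinuousOn Ω (Set.Icc 2 M) := by
  have hprim := intervalIntegral.continuousOn_primitive_interval (a := 2) (b := M)
    (f := fun u => Ω (u - 1) / (u - 1)) (μ := volume) (by rwa [Set.uIcc_of_le hM])
  rw [Set.uIcc_of_le hM] at hprim
  have hcont : ContinuousOn (fun x => 1 + K * ∫ u in (2:ℝ)..x, Ω (u - 1) / (u - 1))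
      (Set.Icc 2 M) := continuousOn_const.add (continuousOn_const.mul hprim)
  exact hcont.congr fun x hx => h2 x hx.1

lemma gb_integrable {K : ℝ} {Ω : ℝ → ℝ}
    (h1 : ∀ x : ℝ, 1 ≤ x → x < 2 → Ω x = 1)
    (h2 : ∀ x : ℝ, 2 ≤ x → Ω x = 1 + K * ∫ u in (2:ℝ)..x, Ω (u - 1) / (u - 1)) :
    ∀ m : ℕ, IntegrableOn (fun u => Ω (u - 1) / (u - 1)) (Set.Icc 2 (3 + m : ℝ)) := by
  intro m
  induction m with
  | zero =>
    norm_num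
    have hbase : IntegrableOn (fun u : ℝ => 1 / (u - 1)) (Set.Icc 2 3) := by
      apply ContinuousOn.integrableOn_Icc
      apply ContinuousOn.div continuousOn_const
        ((continuousOn_id.sub continuousOn_const))
      intro u hu
      have : (2:ℝ) ≤ u := hu.1
      intro h
      simp only [Pi.sub_apply, id] at h
      linarith [sub_eq_zero.mp h]
    refine hbase.congr_fun (fun u hu => ?_) measurableSet_Icc
    have hΩ : Ω (u - 1) = 1 := by
      rcases lt_or_ge u 3 with h | h
      · exact h1 _ (by linarith [hu.1]) (by linarith)
      · have hu3 : u = 3 := le_antisymm hu.2 h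
        rw [hu3]
        norm_num
        rw [h2 2 le_rfl, intervalIntegral.integral_same]
        norm_num
    rw [hΩ]
  | succ m ih =>
    have hcast : ((m + 1 : ℕ) : ℝ) = (m : ℝ) + 1 := by push_cast; ring
    rw [hcast]
    have hsplit : Set.Icc (2:ℝ) (3 + ((m:ℝ) + 1)) =
        Set.Icc 2 (3 + (m:ℝ)) ∪ Set.Icc (3 + (m:ℝ)) (3 + (m:ℝ) + 1) := by
      have hm : (0:ℝ) ≤ (m:ℝ) := Nat.cast_nonneg m
      rw [Set.Icc_union_Icc_eq_Icc (by linarith) (by linarith)]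
      ring_nf
    rw [hsplit]
    apply ih.union
    have hcont := gb_omega_cont h2 (M := 3 + (m:ℝ)) (by linarith [Nat.cast_nonneg (α := ℝ) m]) ih
    have hc2 : ContinuousOn (fun u => Ω (u - 1) / (u - 1))
        (Set.Icc (3 + (m:ℝ)) (3 + (m:ℝ) + 1)) := by
      apply ContinuousOn.div
      · apply hcont.comp ((continuousOn_id.sub continuousOn_const))
        intro u hu
        constructor
        · have := hu.1; simp only [Pi.sub_apply, id]; linarith
        · have := hu.2; simp only [Pi.sub_apply, id]; linarith
      · exact continuousOn_id.sub continuousOn_const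
      · intro u hu
        have := hu.1
        intro h
        have : u = 1 := by linarith [sub_eq_zero.mp h]
        linarith
    exact hc2.integrableOn_Icc


lemma gb_int_n {K : ℝ} {Ω : ℝ → ℝ}
    (h1 : ∀ x : ℝ, 1 ≤ x → x < 2 → Ω x = 1)
    (h2 : ∀ x : ℝ, 2 ≤ x → Ω x = 1 + K * ∫ u in (2:ℝ)..x, Ω (u - 1) / (u - 1))
    {n : ℕ} (hn : 3 ≤ n) :
    IntegrableOn (fun u => Ω (u - 1) / (u - 1)) (Set.Icc 2 (n : ℝ)) := by
  have h := gb_integrable h1 h2 (K := K) (n - 3)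
  have : (3 + ((n - 3 : ℕ) : ℝ)) = (n : ℝ) := by
    have : ((n - 3 : ℕ) : ℝ) = (n : ℝ) - 3 := by
      push_cast [hn]; ring
    rw [this]; ring
  rwa [this] at h

lemma gb_omega_n {K : ℝ} {Ω : ℝ → ℝ}
    (h1 : ∀ x : ℝ, 1 ≤ x → x < 2 → Ω x = 1)
    (h2 : ∀ x : ℝ, 2 ≤ x → Ω x = 1 + K * ∫ u in (2:ℝ)..x, Ω (u - 1) / (u - 1))
    {n : ℕ} (hn : 3 ≤ n) {c : ℕ → ℝ} (hc : Summable fun i => |c i|)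
    (hcrep : ∀ z ∈ Set.Ico (-1 : ℝ) 1,
      Ω ((n : ℝ) - 1 + (1 + z) / 2) = ∑' i : ℕ, c i * z ^ i) :
    Ω (n : ℝ) = ∑' i : ℕ, c i := by
  set N := (n : ℝ) with hN
  have hN3 : (3:ℝ) ≤ N := by rw [hN]; exact_mod_cast hn
  have hint := gb_int_n h1 h2 hn (K := K)
  have hΩc : ContinuousOn Ω (Set.Icc 2 N) := gb_omega_cont h2 (by linarith) hint
  have hg := gb_cont hc
  set g : ℝ → ℝ := fun t => ∑' j : ℕ, c j * t^j with hgdef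
  set l : Filter ℝ := nhdsWithin N (Set.Iio N) with hl
  have T1 : Tendsto Ω l (nhds (Ω N)) := by
    have h := (hΩc N ⟨by linarith, le_rfl⟩).mono (Set.Ico_subset_Icc_self : Set.Ico 2 N ⊆ _)
    rwa [ContinuousWithinAt, nhdsWithin_Ico_eq_nhdsLT (by linarith : (2:ℝ) < N)] at h
  have hev : ∀ᶠ u in l, N - 1 < u ∧ u < N := by
    have h1' : ∀ᶠ u in l, N - 1 < u :=
      eventually_nhdsWithin_of_eventually_nhds (eventually_gt_nhds (by linarith))
    have h2' : ∀ᶠ u in l, u < N := eventually_mem_nhdsWithin.mono (fun u hu => hu)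
    exact h1'.and h2'
  have hφ : Tendsto (fun u : ℝ => 2*u - 2*N + 1) l (nhdsWithin 1 (Set.Icc (-1:ℝ) 1)) := by
    rw [tendsto_nhdsWithin_iff]
    constructor
    · have hcont : Continuous fun u : ℝ => 2*u - 2*N + 1 := by continuity
      have h := (hcont.tendsto N).mono_left (nhdsWithin_le_nhds (s := Set.Iio N))
      simpa using h
    · exact hev.mono fun u hu => ⟨by linarith [hu.1], by linarith [hu.2]⟩
  have T2 : Tendsto Ω l (nhds (g 1)) := by
    have hgcw : Tendsto g (nhdsWithin 1 (Set.Icc (-1:ℝ) 1)) (nhds (g 1)) :=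
      hg 1 ⟨by norm_num, le_rfl⟩
    have hgt : Tendsto (fun u => g (2*u - 2*N + 1)) l (nhds (g 1)) := hgcw.comp hφ
    apply hgt.congr'
    apply hev.mono
    intro u hu
    have hz : (2*u - 2*N + 1) ∈ Set.Ico (-1:ℝ) 1 := ⟨by linarith [hu.1], by linarith [hu.2]⟩
    have := hcrep _ hz
    have harg : N - 1 + (1 + (2*u - 2*N + 1))/2 = u := by ring
    rw [harg] at this
    exact this.symm
  have huniq : Ω N = g 1 := tendsto_nhds_unique T1 T2
  rw [huniq, hgdef]
  simp
end GBaux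

set_option maxHeartbeats 1000000 in
theorem genBuchstab_taylor_recurrence (K : ℝ) (hK : 0 < K) (Ω : ℝ → ℝ)
    (h1 : ∀ x : ℝ, 1 ≤ x → x < 2 → Ω x = 1)
    (h2 : ∀ x : ℝ, 2 ≤ x → Ω x = 1 + K * ∫ u in (2 : ℝ)..x, Ω (u - 1) / (u - 1))
    (n : ℕ) (hn : 3 ≤ n) (c : ℕ → ℝ) (hc : Summable fun i => |c i|)
    (hcrep : ∀ z ∈ Set.Ico (-1 : ℝ) 1,
      Ω ((n : ℝ) - 1 + (1 + z) / 2) = ∑' i : ℕ, c i * z ^ i)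
    (α : ℕ → ℝ)
    (hα : ∀ i : ℕ, α i = ∑ j ∈ Finset.range (i + 1),
      ((-1 : ℝ) ^ (i - j) / (2 * (n : ℝ) - 1) ^ (i - j)) * c j)
    (d : ℕ → ℝ)
    (hd0 : d 0 = (∑' i : ℕ, c i)
      - (K / (2 * (n : ℝ) - 1)) * ∑' i : ℕ, (-1 : ℝ) ^ (i + 1) * α i / ((i : ℝ) + 1))
    (hdi : ∀ i : ℕ, 1 ≤ i → d i = K * α (i - 1) / ((2 * (n : ℝ) - 1) * (i : ℝ))) :
    ∀ z ∈ Set.Ico (-1 : ℝ) 1, Ω ((n : ℝ) + (1 + z) / 2) = ∑' i : ℕ, d i * z ^ i := by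
  intro z hz
  obtain ⟨hz1, hz2⟩ := hz
  set N : ℝ := (n : ℝ) with hN
  have hN3 : (3:ℝ) ≤ N := by rw [hN]; exact_mod_cast hn
  set b : ℝ := 2 * N - 1 with hbdef
  have hb : (2:ℝ) ≤ b := by rw [hbdef]; linarith
  have hb0 : (0:ℝ) < b := by linarith
  have hbne : b ≠ 0 := ne_of_gt hb0
  set x : ℝ := N + (1 + z) / 2 with hxdef
  have hxN : N ≤ x := by rw [hxdef]; linarith
  have hx1 : x < N + 1 := by rw [hxdef]; linarith
  set f : ℝ → ℝ := fun u => Ω (u - 1) / (u - 1) with hfdef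
  set g : ℝ → ℝ := fun t => ∑' j : ℕ, c j * t ^ j with hgdef
  have hαsum : Summable fun i => |α i| := gb_alpha_summable hc hb hα
  -- Ω at N
  have hΩN : Ω N = ∑' i : ℕ, c i := gb_omega_n h1 h2 hn hc hcrep
  -- integrability on [2, N]
  have hI1 : IntervalIntegrable f volume 2 N := by
    have := gb_int_n h1 h2 hn (K := K)
    apply IntegrableOn.intervalIntegrable
    rwa [Set.uIcc_of_le (by linarith)]
  -- integrability on [N, x]
  have hEqNx : Set.EqOn f (fun u => g (2*u - 2*N - 1) / (u - 1)) (Set.Icc N x) := by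
    intro u hu
    have h1' : N ≤ u := hu.1
    have h2' : u ≤ x := hu.2
    have hz' : (2*u - 2*N - 1) ∈ Set.Ico (-1:ℝ) 1 := by
      constructor
      · linarith
      · have : u ≤ N + (1+z)/2 := by rw [hxdef] at h2'; exact h2'
        linarith
    have hrep := hcrep _ hz'
    have harg : N - 1 + (1 + (2*u - 2*N - 1))/2 = u - 1 := by ring
    rw [harg] at hrep
    show Ω (u-1) / (u-1) = g (2*u - 2*N - 1) / (u - 1)
    rw [hrep]
  have hgcont := gb_cont hc
  have hcont2 : ContinuousOn (fun u => g (2*u - 2*N - 1) / (u - 1)) (Set.Icc N x) := by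
    apply ContinuousOn.div
    · apply hgcont.comp (Continuous.continuousOn (by continuity))
      intro u hu
      have h1' : N ≤ u := hu.1
      have h2' : u ≤ x := hu.2
      have hux : u ≤ N + (1+z)/2 := by rw [hxdef] at h2'; exact h2'
      constructor
      · show (-1:ℝ) ≤ 2*u - 2*N - 1
        linarith
      · show 2*u - 2*N - 1 ≤ 1
        linarith
    · exact continuousOn_id.sub continuousOn_const
    · intro u hu
      have := hu.1
      intro h
      have : u = 1 := by linarith [sub_eq_zero.mp h]
      linarith
  have hI2 : IntervalIntegrable f volume N x := by
    apply IntegrableOn.intervalIntegrable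
    rw [Set.uIcc_of_le hxN]
    exact (hcont2.integrableOn_Icc).congr_fun (fun u hu => (hEqNx hu).symm) measurableSet_Icc
  -- split
  have hsplit : (∫ u in (2:ℝ)..x, f u) = (∫ u in (2:ℝ)..N, f u) + ∫ u in N..x, f u :=
    (intervalIntegral.integral_add_adjacent_intervals hI1 hI2).symm
  have hΩx : Ω x = Ω N + K * ∫ u in N..x, f u := by
    rw [h2 x (by linarith), h2 N (by linarith), hsplit]
    ring
  -- substitution
  have hsub : (∫ t in (-1:ℝ)..z, f (t/2 + (N + 1/2))) = 2 * ∫ u in N..x, f u := by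
    have h := intervalIntegral.integral_comp_div_add (a := (-1:ℝ)) (b := z) (f := f)
      (two_ne_zero) (N + 1/2)
    have e1 : (-1:ℝ)/2 + (N + 1/2) = N := by ring
    have e2 : z/2 + (N + 1/2) = x := by rw [hxdef]; ring
    rw [e1, e2] at h
    rw [h, smul_eq_mul]
  -- integrand rewrite
  have hEqT : Set.EqOn (fun t => f (t/2 + (N + 1/2)))
      (fun t => 2 * ∑' i : ℕ, α i / b * t^i) (Set.uIcc (-1:ℝ) z) := by
    rw [Set.uIcc_of_le (by linarith)]
    intro t ht
    have ht1 : -1 ≤ t := ht.1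
    have ht2 : t ≤ z := ht.2
    have htmem : t ∈ Set.Ico (-1:ℝ) 1 := ⟨ht1, by linarith⟩
    have hrep := hcrep t htmem
    have harg : N - 1 + (1 + t)/2 = t/2 + (N + 1/2) - 1 := by ring
    rw [harg] at hrep
    show f (t/2 + (N + 1/2)) = 2 * ∑' i : ℕ, α i / b * t^i
    have hbt : (0:ℝ) < b + t := by linarith
    have : f (t/2 + (N + 1/2)) = g t / ((b + t)/2) := by
      rw [hfdef]
      simp only
      rw [hrep]
      congr 1
      rw [hbdef]; ring
    rw [this]
    have hcau := gb_cauchy hc hb hα (t := t) ⟨ht1, by linarith⟩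
    rw [← hcau, hgdef]
    field_simp
  have hIcauchy : (∫ t in (-1:ℝ)..z, f (t/2 + (N + 1/2)))
      = 2 * ∑' i : ℕ, (α i / b) * (z^(i+1) - (-1:ℝ)^(i+1)) / (i+1) := by
    rw [intervalIntegral.integral_congr hEqT, intervalIntegral.integral_const_mul]
    congr 1
    have hasum : Summable fun i => |α i / b| := by
      apply (hαsum.div_const b).congr
      intro i
      rw [abs_div, abs_of_pos hb0]
    exact gb_termwise_integral hasum hz1 (le_of_lt hz2)
  have hint_val : (∫ u in N..x, f u)
      = ∑' i : ℕ, (α i / b) * (z^(i+1) - (-1:ℝ)^(i+1)) / (i+1) := by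
    have := hsub.symm.trans hIcauchy
    linarith
  -- summability of pieces
  have hdsucc : ∀ i : ℕ, d (i+1) = K * α i / (b * ((i:ℝ)+1)) := by
    intro i
    rw [hdi (i+1) (by omega)]
    simp only [Nat.add_sub_cancel]
    push_cast
    rw [hbdef, hN]
  have hT : Summable fun i : ℕ => d (i+1) * z^(i+1) := by
    apply Summable.of_abs
    apply ((hαsum.mul_left (K/b)).of_nonneg_of_le (fun i => abs_nonneg _))
    intro i
    rw [hdsucc i, abs_mul, abs_div, abs_pow]
    have hzabs : |z| ≤ 1 := abs_le.2 ⟨hz1, le_of_lt hz2⟩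
    have h1' : |K * α i| / |b * ((i:ℝ)+1)| ≤ K/b * |α i| := by
      rw [abs_mul, abs_mul, abs_of_pos hK, abs_of_pos hb0,
        abs_of_pos (by positivity : (0:ℝ) < (i:ℝ)+1)]
      rw [div_le_iff₀ (by positivity)]
      have : K * |α i| * (1 : ℝ) ≤ K * |α i| * ((i:ℝ)+1) := by
        apply mul_le_mul_of_nonneg_left _ (by positivity)
        have : (0:ℝ) ≤ (i:ℝ) := Nat.cast_nonneg i
        linarith
      calc K * |α i| ≤ K * |α i| * ((i:ℝ)+1) := by linarith
        _ = K / b * |α i| * (b * ((i:ℝ)+1)) := by field_simp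
    calc |K * α i| / |b * ((i:ℝ)+1)| * |z|^(i+1)
        ≤ |K * α i| / |b * ((i:ℝ)+1)| * 1 :=
          mul_le_mul_of_nonneg_left (pow_le_one₀ (abs_nonneg z) hzabs) (by positivity)
      _ = |K * α i| / |b * ((i:ℝ)+1)| := mul_one _
      _ ≤ K/b * |α i| := h1'
  have hA : Summable fun i : ℕ => (-1:ℝ)^(i+1) * α i / ((i:ℝ)+1) := by
    apply Summable.of_abs
    apply (hαsum.of_nonneg_of_le (fun i => abs_nonneg _))
    intro i
    rw [abs_div, abs_mul, abs_pow, abs_neg, abs_one, one_pow, one_mul,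
      abs_of_pos (by positivity : (0:ℝ) < (i:ℝ)+1)]
    rw [div_le_iff₀ (by positivity)]
    have h0 : (0:ℝ) ≤ (i:ℝ) := Nat.cast_nonneg i
    nlinarith [abs_nonneg (α i)]
  have hd : Summable fun i : ℕ => d i * z^i := (summable_nat_add_iff 1).1 (by exact hT)
  -- final computation
  rw [hΩx, hΩN, hint_val, hd.tsum_eq_zero_add]
  simp only [pow_zero, mul_one]
  rw [hd0]
  have hKS : K * ∑' i : ℕ, (α i / b) * (z^(i+1) - (-1:ℝ)^(i+1)) / (i+1)
      = (∑' i : ℕ, d (i+1) * z^(i+1))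
        - (K / b) * ∑' i : ℕ, (-1:ℝ)^(i+1) * α i / ((i:ℝ)+1) := by
    rw [← tsum_mul_left (a := K), ← tsum_mul_left (a := K / b), ← hT.tsum_sub (hA.mul_left _)]
    refine tsum_congr fun i => ?_
    rw [hdsucc i]
    have hi1 : ((i:ℝ)+1) ≠ 0 := by positivity
    field_simp
  rw [hKS]
  ring
end

section
/- For every K > 0 and every integer n ≥ 2, Ω_K(n+1) ≤ Ω_K(n)·(1 + K/(n−1)) whenever n ≥ 2, and consequently Ω_K(x) ≤ (1 + K)^{⌈x⌉} for all x ≥ 1; in particular Ω_K grows at most polynomially in x (indeed Ω_K(x) = O(x^K)). -/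
open Set MeasureTheory intervalIntegral Finset

theorem genBuchstab_growth (K : ℝ) (hK : 0 < K) (Ω : ℝ → ℝ)
    (h1 : ∀ x : ℝ, 1 ≤ x → x < 2 → Ω x = 1)
    (h2 : ∀ x : ℝ, 2 ≤ x → Ω x = 1 + K * ∫ u in (2 : ℝ)..x, Ω (u - 1) / (u - 1)) :
    (∀ n : ℕ, 2 ≤ n → Ω ((n : ℝ) + 1) ≤ Ω (n : ℝ) * (1 + K / ((n : ℝ) - 1))) ∧
      (∀ x : ℝ, 1 ≤ x → Ω x ≤ (1 + K) ^ (⌈x⌉₊)) ∧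
      ∃ C : ℝ, 0 < C ∧ ∀ x : ℝ, 1 ≤ x → Ω x ≤ C * x ^ K := by
  set f : ℝ → ℝ := fun u => Ω (u - 1) / (u - 1) with hf
  have hΩ2 : Ω 2 = 1 := by
    rw [h2 2 le_rfl, intervalIntegral.integral_same]; ring
  -- lower bound 1 ≤ Ω
  have one_leN : ∀ n : ℕ, ∀ x : ℝ, 1 ≤ x → x ≤ n + 2 → 1 ≤ Ω x := by
    intro n
    induction n with
    | zero =>
      intro x hx1 hx2
      rcases lt_or_ge x 2 with h | h
      · rw [h1 x hx1 h]
      · have : x = 2 := le_antisymm (by exact_mod_cast hx2) h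
        rw [this, hΩ2]
    | succ n ih =>
      intro x hx1 hx2
      rcases lt_or_ge x 2 with h | h
      · rw [h1 x hx1 h]
      · rw [h2 x h]
        have hnn : 0 ≤ ∫ u in (2:ℝ)..x, f u := by
          apply intervalIntegral.integral_nonneg h
          intro u hu
          have h1u : 1 ≤ u - 1 := by linarith [hu.1]
          have h2u : u - 1 ≤ n + 2 := by
            have := hu.2; push_cast at hx2 ⊢; linarith
          exact div_nonneg (le_trans zero_le_one (ih (u-1) h1u h2u)) (by linarith)
        nlinarith [mul_nonneg hK.le hnn]
  have one_le : ∀ x : ℝ, 1 ≤ x → 1 ≤ Ω x := by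
    intro x hx
    refine one_leN ⌈x⌉₊ x hx ?_
    have := Nat.le_ceil x
    push_cast at this ⊢; linarith
  -- continuity
  have contN : ∀ n : ℕ, ContinuousOn Ω (Icc 1 ((n:ℝ) + 2)) := by
    intro n
    induction n with
    | zero =>
      refine (continuousOn_const (c := (1:ℝ))).congr ?_
      intro x hx
      simp only [Nat.cast_zero, zero_add] at hx
      rcases lt_or_ge x 2 with h | h
      · exact h1 x hx.1 h
      · have : x = 2 := le_antisymm hx.2 h
        rw [this, hΩ2]
    | succ n ih =>
      have hn0 : (0:ℝ) ≤ (n:ℝ) := Nat.cast_nonneg n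
      have hcast : ((n+1:ℕ):ℝ) + 2 = (n:ℝ) + 3 := by push_cast; ring
      rw [hcast]
      have hfc : ContinuousOn f (Icc 2 ((n:ℝ) + 3)) := by
        apply ContinuousOn.div
        · refine ih.comp (continuous_id.sub continuous_const).continuousOn ?_
          intro u hu
          have h1 := hu.1; have h2 := hu.2
          constructor
          · show (1:ℝ) ≤ u - 1; linarith
          · show u - 1 ≤ (n:ℝ) + 2; linarith
        · exact (continuous_id.sub continuous_const).continuousOn
        · intro u hu
          show u - 1 ≠ 0
          have := hu.1; intro hc; linarith
      have hint : IntervalIntegrable f volume 2 ((n:ℝ) + 3) :=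
        hfc.intervalIntegrable_of_Icc (by linarith)
      have hF : ContinuousOn (fun x => ∫ u in (2:ℝ)..x, f u) (Icc 2 ((n:ℝ)+3)) := by
        have h := continuousOn_primitive_interval' hint left_mem_uIcc
        rwa [uIcc_of_le (by linarith : (2:ℝ) ≤ (n:ℝ)+3)] at h
      have hg : ContinuousOn (fun x => 1 + K * ∫ u in (2:ℝ)..(max x 2), f u) (Icc 1 ((n:ℝ)+3)) := by
        apply continuousOn_const.add
        apply continuousOn_const.mul
        refine hF.comp (continuous_id.max continuous_const).continuousOn ?_
        intro x hx
        exact ⟨le_max_right _ _, max_le hx.2 (by linarith)⟩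
      refine hg.congr ?_
      intro x hx
      show Ω x = 1 + K * ∫ u in (2:ℝ)..(max x 2), f u
      rcases lt_or_ge x 2 with h | h
      · rw [max_eq_right h.le, intervalIntegral.integral_same, h1 x hx.1 h]; ring
      · rw [max_eq_left h, h2 x h]
  have contIcc : ∀ y : ℝ, ContinuousOn Ω (Icc 1 y) := by
    intro y
    refine (contN ⌈y⌉₊).mono (Icc_subset_Icc le_rfl ?_)
    have := Nat.le_ceil y; linarith
  have hfcont : ∀ y : ℝ, ContinuousOn f (Icc 2 y) := by
    intro y
    apply ContinuousOn.div
    · refine (contIcc (y-1)).comp (continuous_id.sub continuous_const).continuousOn ?_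
      intro u hu
      have h1 := hu.1; have h2 := hu.2
      constructor
      · show (1:ℝ) ≤ u - 1; linarith
      · show u - 1 ≤ y - 1; linarith
    · exact (continuous_id.sub continuous_const).continuousOn
    · intro u hu
      show u - 1 ≠ 0
      have := hu.1; intro hc; linarith
  have hinteg : ∀ x y : ℝ, 2 ≤ x → x ≤ y → IntervalIntegrable f volume x y := by
    intro x y hx hxy
    exact ((hfcont y).mono (Icc_subset_Icc hx le_rfl)).intervalIntegrable_of_Icc hxy
  -- splitting, monotonicity, one-step bound
  have fnn : ∀ u : ℝ, 2 ≤ u → 0 ≤ f u := by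
    intro u hu
    rw [hf]
    exact div_nonneg (le_trans zero_le_one (one_le (u-1) (by linarith))) (by linarith)
  have split : ∀ a x : ℝ, 2 ≤ a → a ≤ x → Ω x = Ω a + K * ∫ u in a..x, f u := by
    intro a x ha hax
    rw [h2 x (le_trans ha hax), h2 a ha,
      ← intervalIntegral.integral_add_adjacent_intervals (hinteg 2 a le_rfl ha) (hinteg a x ha hax)]
    ring
  have mono : ∀ x y : ℝ, 1 ≤ x → x ≤ y → Ω x ≤ Ω y := by
    intro x y hx hxy
    rcases lt_or_ge y 2 with h | h
    · rw [h1 x hx (lt_of_le_of_lt hxy h), h1 y (le_trans hx hxy) h]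
    rcases lt_or_ge x 2 with h' | h'
    · rw [h1 x hx h']; exact one_le y (by linarith)
    · rw [split x y h' hxy]
      have hnn : 0 ≤ ∫ u in x..y, f u :=
        intervalIntegral.integral_nonneg hxy (fun u hu => fnn u (le_trans h' hu.1))
      nlinarith [mul_nonneg hK.le hnn]
  have stepBound : ∀ a x : ℝ, 2 ≤ a → a ≤ x → x ≤ a + 1 → Ω x ≤ Ω a * (1 + K / (a - 1)) := by
    intro a x ha hax hx1
    have ha1 : (0:ℝ) < a - 1 := by linarith
    have hΩa : 0 ≤ Ω a := le_trans zero_le_one (one_le a (by linarith))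
    have key : (∫ u in a..x, f u) ≤ ∫ _u in a..x, Ω a / (a - 1) := by
      apply intervalIntegral.integral_mono_on hax (hinteg a x ha hax) intervalIntegrable_const
      intro u hu
      rw [hf]
      exact div_le_div₀ hΩa (mono (u-1) a (by linarith [hu.1]) (by linarith [hu.2])) ha1
        (by linarith [hu.1])
    rw [intervalIntegral.integral_const, smul_eq_mul] at key
    have hsp := split a x ha hax
    have hd : 0 ≤ Ω a / (a - 1) := div_nonneg hΩa ha1.le
    have h4 : (x - a) * (Ω a / (a-1)) ≤ Ω a / (a - 1) := by nlinarith
    have h5 : K * ∫ u in a..x, f u ≤ K * (Ω a / (a-1)) :=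
      mul_le_mul_of_nonneg_left (le_trans key h4) hK.le
    rw [hsp]
    have hΩ1 : 1 ≤ Ω a := one_le a (by linarith)
    rw [mul_add, mul_one, mul_div_assoc']
    have heq : K * (Ω a / (a-1)) = Ω a * K / (a - 1) := by ring
    linarith [heq ▸ h5]
  have hK1 : (1:ℝ) ≤ 1 + K := by linarith
  -- part A
  have partA : ∀ n : ℕ, 2 ≤ n → Ω ((n : ℝ) + 1) ≤ Ω (n : ℝ) * (1 + K / ((n : ℝ) - 1)) := by
    intro n hn
    have hn2 : (2:ℝ) ≤ (n:ℝ) := by exact_mod_cast hn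
    exact stepBound (n:ℝ) ((n:ℝ)+1) hn2 (by linarith) le_rfl
  -- part B
  have expB : ∀ n : ℕ, ∀ x : ℝ, 1 ≤ x → x ≤ (n:ℝ) + 2 → Ω x ≤ (1 + K) ^ (n + 1) := by
    intro n
    induction n with
    | zero =>
      intro x hx1 hx2
      simp only [Nat.cast_zero, zero_add] at hx2
      have : Ω x = 1 := by
        rcases lt_or_ge x 2 with h | h
        · exact h1 x hx1 h
        · rw [le_antisymm hx2 h, hΩ2]
      rw [this, pow_one]; linarith
    | succ n ih =>
      intro x hx1 hx2
      push_cast at hx2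
      rcases le_or_gt x ((n:ℝ) + 2) with h | h
      · exact le_trans (ih x hx1 h) (pow_le_pow_right₀ (by linarith) (by omega))
      · have ha : (2:ℝ) ≤ (n:ℝ) + 2 := by linarith [Nat.cast_nonneg (α := ℝ) n]
        have hstep := stepBound ((n:ℝ)+2) x ha h.le (by linarith)
        have hΩn := ih ((n:ℝ)+2) (by linarith) le_rfl
        have hfac : 1 + K / ((n:ℝ)+2-1) ≤ 1 + K := by
          have : K / ((n:ℝ)+1) ≤ K := by
            apply div_le_self hK.le; linarith [Nat.cast_nonneg (α := ℝ) n]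
          have h11 : (n:ℝ) + 2 - 1 = (n:ℝ) + 1 := by ring
          rw [h11]; linarith
        calc Ω x ≤ Ω ((n:ℝ)+2) * (1 + K / ((n:ℝ)+2-1)) := hstep
          _ ≤ (1+K)^(n+1) * (1+K) := by
              apply mul_le_mul hΩn hfac _ (by positivity)
              have h0 : (0:ℝ) < (n:ℝ) + 1 := by positivity
              have : 0 ≤ K / ((n:ℝ)+2-1) := by
                apply div_nonneg hK.le; linarith [Nat.cast_nonneg (α := ℝ) n]
              linarith
          _ = (1+K)^(n+2) := by ring
  have partB : ∀ x : ℝ, 1 ≤ x → Ω x ≤ (1 + K) ^ (⌈x⌉₊) := by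
    intro x hx
    have hm : 1 ≤ ⌈x⌉₊ := Nat.one_le_ceil_iff.mpr (by linarith)
    obtain ⟨j, hj⟩ := Nat.exists_eq_add_of_le hm
    have hxj : x ≤ (j:ℝ) + 2 := by
      have h2 := Nat.le_ceil x
      rw [hj] at h2; push_cast at h2; linarith
    calc Ω x ≤ (1+K)^(j+1) := expB j x hx hxj
      _ ≤ (1+K)^(⌈x⌉₊) := by
          apply pow_le_pow_right₀ (by linarith)
          omega
  refine ⟨partA, partB, ?_⟩
  -- part C
  have prodB : ∀ m : ℕ, Ω ((m:ℝ) + 2) ≤ ∏ j ∈ Finset.Icc 1 m, (1 + K / (j:ℝ)) := by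
    intro m
    induction m with
    | zero => simp [hΩ2]
    | succ m ih =>
      have hm0 : (0:ℝ) ≤ (m:ℝ) := Nat.cast_nonneg m
      have hstep := stepBound ((m:ℝ)+2) ((m:ℝ)+3) (by linarith) (by linarith) (by linarith)
      have h3 : Ω ((m:ℝ)+3) ≤ (∏ j ∈ Finset.Icc 1 m, (1 + K / (j:ℝ))) * (1 + K / ((m:ℝ)+1)) := by
        have h11 : (m:ℝ) + 2 - 1 = (m:ℝ) + 1 := by ring
        rw [h11] at hstep
        refine le_trans hstep (mul_le_mul_of_nonneg_right ih ?_)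
        have : 0 ≤ K / ((m:ℝ)+1) := div_nonneg hK.le (by linarith)
        linarith
      have hins : ∏ j ∈ Finset.Icc 1 (m+1), (1 + K / (j:ℝ))
          = (∏ j ∈ Finset.Icc 1 m, (1 + K / (j:ℝ))) * (1 + K / ((m:ℝ)+1)) := by
        rw [Finset.prod_Icc_succ_top (by omega)]
        push_cast; ring
      rw [hins]
      have hc : ((m+1:ℕ):ℝ) + 2 = (m:ℝ) + 3 := by push_cast; ring
      rw [hc]
      exact h3
  have harm : ∀ m : ℕ, (∑ j ∈ Finset.Icc 1 m, (1:ℝ) / (j:ℝ)) ≤ 1 + Real.log m := by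
    intro m
    induction m with
    | zero => simp
    | succ m ih =>
      rcases Nat.eq_zero_or_pos m with rfl | hm
      · simp
      have hm0 : (0:ℝ) < (m:ℝ) := by exact_mod_cast hm
      have hlog : Real.log m + 1 / ((m:ℝ)+1) ≤ Real.log ((m:ℝ)+1) := by
        have hq : (0:ℝ) < (m:ℝ) / ((m:ℝ)+1) := by positivity
        have hlq := Real.log_le_sub_one_of_pos hq
        rw [Real.log_div (by positivity) (by positivity)] at hlq
        have hmm : (m:ℝ) / ((m:ℝ)+1) - 1 = -(1 / ((m:ℝ)+1)) := by
          field_simp; ring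
        rw [hmm] at hlq
        linarith
      rw [Finset.sum_Icc_succ_top (by omega)]
      push_cast
      calc (∑ j ∈ Finset.Icc 1 m, (1:ℝ)/(j:ℝ)) + 1/((m:ℝ)+1)
          ≤ (1 + Real.log m) + 1/((m:ℝ)+1) := by linarith
        _ ≤ 1 + Real.log ((m:ℝ)+1) := by linarith
  have prodExp : ∀ m : ℕ, 1 ≤ m →
      (∏ j ∈ Finset.Icc 1 m, (1 + K / (j:ℝ))) ≤ Real.exp K * (m:ℝ) ^ K := by
    intro m hm
    have hm0 : (0:ℝ) < (m:ℝ) := by exact_mod_cast hm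
    have hp1 : (∏ j ∈ Finset.Icc 1 m, (1 + K / (j:ℝ)))
        ≤ ∏ j ∈ Finset.Icc 1 m, Real.exp (K / (j:ℝ)) := by
      apply Finset.prod_le_prod
      · intro j hj
        simp only [Finset.mem_Icc] at hj
        have : (0:ℝ) < (j:ℝ) := by exact_mod_cast hj.1
        positivity
      · intro j hj
        have := Real.add_one_le_exp (K / (j:ℝ))
        linarith
    have hp2 : ∏ j ∈ Finset.Icc 1 m, Real.exp (K / (j:ℝ))
        = Real.exp (∑ j ∈ Finset.Icc 1 m, K / (j:ℝ)) := (Real.exp_sum _ _).symm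
    have hp3 : (∑ j ∈ Finset.Icc 1 m, K / (j:ℝ)) = K * ∑ j ∈ Finset.Icc 1 m, (1:ℝ)/(j:ℝ) := by
      rw [Finset.mul_sum]; apply Finset.sum_congr rfl; intro j _; ring
    have hp4 : (∑ j ∈ Finset.Icc 1 m, K / (j:ℝ)) ≤ K * (1 + Real.log m) := by
      rw [hp3]
      exact mul_le_mul_of_nonneg_left (harm m) hK.le
    have hp5 : Real.exp (K * (1 + Real.log m)) = Real.exp K * (m:ℝ) ^ K := by
      rw [mul_add, Real.exp_add, mul_one, Real.rpow_def_of_pos hm0]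
      ring_nf
    calc (∏ j ∈ Finset.Icc 1 m, (1 + K / (j:ℝ)))
        ≤ Real.exp (∑ j ∈ Finset.Icc 1 m, K / (j:ℝ)) := by rw [← hp2]; exact hp1
      _ ≤ Real.exp (K * (1 + Real.log m)) := Real.exp_le_exp.mpr hp4
      _ = Real.exp K * (m:ℝ) ^ K := hp5
  refine ⟨Real.exp K * (1 + K) ^ 3, by positivity, ?_⟩
  intro x hx
  have hxK : (1:ℝ) ≤ x ^ K := Real.one_le_rpow hx hK.le
  have hexp1 : (1:ℝ) ≤ Real.exp K := by
    have := Real.add_one_le_exp K; linarith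
  rcases lt_or_ge x 3 with h | h
  · have hceil : ⌈x⌉₊ ≤ 3 := Nat.ceil_le.mpr (by push_cast; linarith)
    have hB := partB x hx
    have hpow : (1+K) ^ ⌈x⌉₊ ≤ (1+K)^3 := pow_le_pow_right₀ (by linarith) hceil
    calc Ω x ≤ (1+K)^3 := le_trans hB hpow
      _ = 1 * ((1+K)^3 * 1) := by ring
      _ ≤ Real.exp K * ((1+K)^3 * (x ^ K)) := by
          apply mul_le_mul hexp1 _ (by positivity) (by positivity)
          apply mul_le_mul_of_nonneg_left hxK (by positivity)
      _ = Real.exp K * (1+K)^3 * x ^ K := by ring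
  · set n := ⌊x⌋₊ with hn
    have hn3 : 3 ≤ n := by
      rw [hn]; exact Nat.le_floor (by exact_mod_cast h)
    have hnx : (n:ℝ) ≤ x := Nat.floor_le (by linarith)
    have hxn : x ≤ (n:ℝ) + 1 := by
      have := Nat.lt_floor_add_one x; linarith
    obtain ⟨j, hj⟩ := Nat.exists_eq_add_of_le hn3
    have hj1 : (1:ℕ) ≤ j + 2 := by omega
    have hΩx : Ω x ≤ Ω ((n:ℝ) + 1) := mono x ((n:ℝ)+1) hx (by linarith)
    have hcast : (n:ℝ) + 1 = ((j+2:ℕ):ℝ) + 2 := by rw [hj]; push_cast; ring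
    have hΩn : Ω ((n:ℝ)+1) ≤ ∏ i ∈ Finset.Icc 1 (j+2), (1 + K / (i:ℝ)) := by
      rw [hcast]; exact prodB (j+2)
    have hjx : ((j+2:ℕ):ℝ) ≤ x := by
      have : ((j+2:ℕ):ℝ) ≤ (n:ℝ) := by rw [hj]; push_cast; linarith
      linarith
    have hrp : ((j+2:ℕ):ℝ) ^ K ≤ x ^ K :=
      Real.rpow_le_rpow (by positivity) hjx hK.le
    have hfinal : Ω x ≤ Real.exp K * x ^ K := by
      calc Ω x ≤ ∏ i ∈ Finset.Icc 1 (j+2), (1 + K / (i:ℝ)) := le_trans hΩx hΩn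
        _ ≤ Real.exp K * ((j+2:ℕ):ℝ) ^ K := prodExp (j+2) hj1
        _ ≤ Real.exp K * x ^ K := mul_le_mul_of_nonneg_left hrp (by positivity)
    calc Ω x ≤ Real.exp K * x ^ K := hfinal
      _ = Real.exp K * 1 * x ^ K := by ring
      _ ≤ Real.exp K * (1+K)^3 * x ^ K := by
          apply mul_le_mul_of_nonneg_right _ (by positivity)
          apply mul_le_mul_of_nonneg_left _ (by positivity)
          nlinarith [hK.le, sq_nonneg K, pow_nonneg hK.le 3]
end
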